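/- arXiv:1110.4274 — 13 statements merged into one kernel-verified Lean document; each statement's English description precedes it below -/
import Mathlib

section
/- Let X be a set and let 𝒜 be a family of subsets of X that has independence dimension ≤ 1 with respect to X. Then there exists a linear order < on X such that for every A ∈ 𝒜, either A is a <-convex subset of X or X \ A is a <-convex subset of X. -/
/-!
Complementing the members that contain a fixed point `x₀` turns a family of independence
dimension `≤ 1` into a laminar family: two members now both miss `x₀`, so one of the three
remaining cells `B ∩ C`, `B \ C`, `C \ B` is empty. It therefore suffices to order the points
so that every member of a laminar family is convex.

For that, let `branch ℬ x y` be the union of the members containing `x` but not `y`; in the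
tree of a laminar family this is the part hanging below the fork of `x` and `y` on the side
of `x`. Points are compared by the pair `(branch ℬ x y, x)` against `(branch ℬ y x, y)`
under a lexicographic well-order. If a member `B` contains `u` and `v` but not `w`, then `w`
sees `u` and `v` through the same branches, so it lies on the same side of both; this gives
transitivity and the convexity of `B`. If no member contains exactly two of three points, the
three comparisons use the same three pairs and transitivity is that of the lexicographic order.
-/

/-- `S` is convex with respect to the strict order `r`. -/
def IsRConvex {X : Type*} (r : X → X → Prop) (S : Set X) : Prop :=
  ∀ a b c : X, r a b → r b c → a ∈ S → c ∈ S → b ∈ S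

/-- A family of subsets of `X` has independence dimension `≤ 1` with respect to `X`. -/
def IndepDimLEOne {X : Type*} (𝒜 : Set (Set X)) : Prop :=
  ∀ A ∈ 𝒜, ∀ B ∈ 𝒜, A ∩ B = ∅ ∨ A \ B = ∅ ∨ B \ A = ∅ ∨ (A ∪ B)ᶜ = ∅

section Laminar

variable {X : Type*}

def SomeCellEmpty (A B : Set X) : Prop :=
  A ∩ B = ∅ ∨ A \ B = ∅ ∨ B \ A = ∅ ∨ (A ∪ B)ᶜ = ∅

theorem SomeCellEmpty.symm {A B : Set X} (h : SomeCellEmpty A B) : SomeCellEmpty B A := by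
  unfold SomeCellEmpty at *
  rw [Set.inter_comm, Set.union_comm]
  tauto

theorem SomeCellEmpty.compl_left {A B : Set X} (h : SomeCellEmpty A B) :
    SomeCellEmpty Aᶜ B := by
  unfold SomeCellEmpty at *
  have h₁ : Aᶜ ∩ B = B \ A := by rw [Set.inter_comm, Set.sdiff_eq]
  have h₂ : Aᶜ \ B = (A ∪ B)ᶜ := by rw [Set.sdiff_eq, Set.compl_union]
  have h₃ : B \ Aᶜ = A ∩ B := by rw [Set.sdiff_compl, Set.inter_comm]
  have h₄ : (Aᶜ ∪ B)ᶜ = A \ B := by rw [Set.compl_union, compl_compl, Set.sdiff_eq]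
  rw [h₁, h₂, h₃, h₄]
  tauto

theorem SomeCellEmpty.compl_right {A B : Set X} (h : SomeCellEmpty A B) :
    SomeCellEmpty A Bᶜ :=
  h.symm.compl_left.symm

theorem IndepDimLEOne.image {𝒜 : Set (Set X)} (h : IndepDimLEOne 𝒜) {f : Set X → Set X}
    (hf : ∀ A, f A = A ∨ f A = Aᶜ) : IndepDimLEOne (f '' 𝒜) := by
  rintro _ ⟨A, hA, rfl⟩ _ ⟨B, hB, rfl⟩
  have hAB : SomeCellEmpty A B := h A hA B hB
  rcases hf A with hfA | hfA <;> rcases hf B with hfB | hfB <;> rw [hfA, hfB]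
  exacts [hAB, hAB.compl_right, hAB.compl_left, hAB.compl_left.compl_right]

def IsLaminar (ℬ : Set (Set X)) : Prop :=
  ∀ B ∈ ℬ, ∀ C ∈ ℬ, (B ∩ C).Nonempty → B ⊆ C ∨ C ⊆ B

theorem IndepDimLEOne.isLaminar {ℬ : Set (Set X)} (h : IndepDimLEOne ℬ) {x₀ : X}
    (hx₀ : ∀ B ∈ ℬ, x₀ ∉ B) : IsLaminar ℬ := by
  intro B hB C hC hBC
  rcases h B hB C hC with h | h | h | h
  · exact absurd h hBC.ne_empty
  · exact Or.inl (Set.sdiff_eq_empty.mp h)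
  · exact Or.inr (Set.sdiff_eq_empty.mp h)
  · exact absurd h (Set.nonempty_iff_ne_empty.mp ⟨x₀, by simp [hx₀ B hB, hx₀ C hC]⟩)

theorem IndepDimLEOne.exists_isLaminar {𝒜 : Set (Set X)} (h : IndepDimLEOne 𝒜) :
    ∃ ℬ : Set (Set X), IsLaminar ℬ ∧ ∀ A ∈ 𝒜, A ∈ ℬ ∨ Aᶜ ∈ ℬ := by
  classical
  rcases isEmpty_or_nonempty X with hX | ⟨⟨x₀⟩⟩
  · exact ⟨𝒜, fun _ _ _ _ ⟨z, _⟩ => isEmptyElim z, fun A hA => Or.inl hA⟩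
  set f : Set X → Set X := fun A => if x₀ ∈ A then Aᶜ else A
  have hf : ∀ A, f A = A ∨ f A = Aᶜ := fun A => by by_cases hA : x₀ ∈ A <;> simp [f, hA]
  have hx₀ : ∀ B ∈ f '' 𝒜, x₀ ∉ B := by
    rintro _ ⟨A, -, rfl⟩
    by_cases hA : x₀ ∈ A <;> simp [f, hA]
  refine ⟨f '' 𝒜, (h.image hf).isLaminar hx₀, fun A hA => ?_⟩
  rcases hf A with e | e
  · exact Or.inl (e ▸ Set.mem_image_of_mem f hA)
  · exact Or.inr (e ▸ Set.mem_image_of_mem f hA)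

def branch (ℬ : Set (Set X)) (x y : X) : Set X :=
  ⋃₀ {B ∈ ℬ | x ∈ B ∧ y ∉ B}

def branchOrder (ℬ : Set (Set X)) (x y : X) : Prop :=
  Prod.Lex WellOrderingRel WellOrderingRel (branch ℬ x y, x) (branch ℬ y x, y)

variable {ℬ : Set (Set X)}

theorem subset_branch {B : Set X} {x y : X} (hB : B ∈ ℬ) (hx : x ∈ B) (hy : y ∉ B) :
    B ⊆ branch ℬ x y :=
  Set.subset_sUnion_of_mem ⟨hB, hx, hy⟩

theorem notMem_branch (x y : X) : y ∉ branch ℬ x y := by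
  rintro ⟨B, ⟨-, -, hy⟩, hyB⟩
  exact hy hyB

theorem branch_ne_branch {B : Set X} {x y : X} (hB : B ∈ ℬ) (hx : x ∈ B) (hy : y ∉ B) :
    branch ℬ x y ≠ branch ℬ y x :=
  fun e => notMem_branch y x (e ▸ subset_branch hB hx hy hx)

theorem branch_congr_right {x y z : X} (hxy : ∀ B ∈ ℬ, x ∈ B → y ∈ B → z ∈ B)
    (hxz : ∀ B ∈ ℬ, x ∈ B → z ∈ B → y ∈ B) : branch ℬ x y = branch ℬ x z :=
  congrArg Set.sUnion <| Set.ext fun B =>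
    ⟨fun ⟨hB, hx, hy⟩ => ⟨hB, hx, fun hz => hy (hxz B hB hx hz)⟩,
      fun ⟨hB, hx, hz⟩ => ⟨hB, hx, fun hy => hz (hxy B hB hx hy)⟩⟩

theorem branchOrder_asymm {x y : X} (h : branchOrder ℬ x y) : ¬branchOrder ℬ y x :=
  asymm (r := Prod.Lex WellOrderingRel WellOrderingRel) h

theorem branchOrder_iff_of_branch_ne {x y : X} (hne : branch ℬ x y ≠ branch ℬ y x) :
    branchOrder ℬ x y ↔ WellOrderingRel (branch ℬ x y) (branch ℬ y x) := by
  simp [branchOrder, Prod.lex_def, hne]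

namespace IsLaminar

variable {B₀ : Set X} {u v w : X}

theorem branch_eq_branch_left (hℬ : IsLaminar ℬ) (hB₀ : B₀ ∈ ℬ) (hu : u ∈ B₀) (hv : v ∈ B₀)
    (hw : w ∉ B₀) : branch ℬ u w = branch ℬ v w := by
  suffices key : ∀ {u v}, u ∈ B₀ → v ∈ B₀ → branch ℬ u w ⊆ branch ℬ v w from
    (key hu hv).antisymm (key hv hu)
  intro u v hu hv
  refine Set.sUnion_subset fun B ⟨hB, huB, hwB⟩ => ?_
  rcases hℬ B hB B₀ hB₀ ⟨u, huB, hu⟩ with hBB₀ | hB₀B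
  · exact hBB₀.trans (subset_branch hB₀ hv hw)
  · exact subset_branch hB (hB₀B hv) hwB

theorem branch_eq_branch_right (hℬ : IsLaminar ℬ) (hB₀ : B₀ ∈ ℬ) (hu : u ∈ B₀) (hv : v ∈ B₀)
    (hw : w ∉ B₀) : branch ℬ w u = branch ℬ w v := by
  have hsame : ∀ B ∈ ℬ, w ∈ B → ∀ {x}, x ∈ B → x ∈ B₀ → u ∈ B ∧ v ∈ B :=
    fun B hB hwB x hx hxB₀ => (hℬ B hB B₀ hB₀ ⟨x, hx, hxB₀⟩).elim
      (fun hBB₀ => absurd (hBB₀ hwB) hw) fun hB₀B => ⟨hB₀B hu, hB₀B hv⟩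
  exact branch_congr_right (fun B hB hwB huB => (hsame B hB hwB huB hu).2)
    (fun B hB hwB hvB => (hsame B hB hwB hvB hv).1)

theorem branchOrder_left_iff (hℬ : IsLaminar ℬ) (hB₀ : B₀ ∈ ℬ) (hu : u ∈ B₀) (hv : v ∈ B₀)
    (hw : w ∉ B₀) : branchOrder ℬ u w ↔ branchOrder ℬ v w := by
  rw [branchOrder_iff_of_branch_ne (branch_ne_branch hB₀ hu hw),
    branchOrder_iff_of_branch_ne (branch_ne_branch hB₀ hv hw),
    hℬ.branch_eq_branch_left hB₀ hu hv hw, hℬ.branch_eq_branch_right hB₀ hu hv hw]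

theorem branchOrder_right_iff (hℬ : IsLaminar ℬ) (hB₀ : B₀ ∈ ℬ) (hu : u ∈ B₀) (hv : v ∈ B₀)
    (hw : w ∉ B₀) : branchOrder ℬ w u ↔ branchOrder ℬ w v := by
  rw [branchOrder_iff_of_branch_ne (branch_ne_branch hB₀ hu hw).symm,
    branchOrder_iff_of_branch_ne (branch_ne_branch hB₀ hv hw).symm,
    hℬ.branch_eq_branch_left hB₀ hu hv hw, hℬ.branch_eq_branch_right hB₀ hu hv hw]

theorem branchOrder_trans (hℬ : IsLaminar ℬ) {x y z : X} (hxy : branchOrder ℬ x y)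
    (hyz : branchOrder ℬ y z) : branchOrder ℬ x z := by
  by_cases hyz_x : ∃ B ∈ ℬ, y ∈ B ∧ z ∈ B ∧ x ∉ B
  · obtain ⟨B, hB, hy, hz, hx⟩ := hyz_x
    exact (hℬ.branchOrder_right_iff hB hy hz hx).mp hxy
  by_cases hxy_z : ∃ B ∈ ℬ, x ∈ B ∧ y ∈ B ∧ z ∉ B
  · obtain ⟨B, hB, hx, hy, hz⟩ := hxy_z
    exact (hℬ.branchOrder_left_iff hB hy hx hz).mp hyz
  by_cases hxz_y : ∃ B ∈ ℬ, x ∈ B ∧ z ∈ B ∧ y ∉ B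
  · obtain ⟨B, hB, hx, hz, hy⟩ := hxz_y
    exact absurd ((hℬ.branchOrder_right_iff hB hz hx hy).mp hyz) (branchOrder_asymm hxy)
  push Not at hyz_x hxy_z hxz_y
  have e₁ : branch ℬ x y = branch ℬ x z := branch_congr_right hxy_z hxz_y
  have e₂ : branch ℬ y x = branch ℬ y z :=
    branch_congr_right (fun B hB hy hx => hxy_z B hB hx hy) hyz_x
  have e₃ : branch ℬ z y = branch ℬ z x :=
    branch_congr_right (fun B hB hz hy => hyz_x B hB hy hz) (fun B hB hz hx => hxz_y B hB hx hz)
  unfold branchOrder at *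
  rw [e₁, e₂] at hxy
  rw [e₃] at hyz
  exact _root_.trans hxy hyz

theorem isStrictTotalOrder_branchOrder (hℬ : IsLaminar ℬ) :
    IsStrictTotalOrder X (branchOrder ℬ) where
  trichotomous _ _ hxy hyx := congrArg Prod.snd (Std.Trichotomous.trichotomous _ _ hxy hyx)
  irrefl _ := irrefl (r := Prod.Lex WellOrderingRel WellOrderingRel) _
  trans _ _ _ := hℬ.branchOrder_trans

theorem isRConvex_branchOrder (hℬ : IsLaminar ℬ) {B : Set X} (hB : B ∈ ℬ) :
    IsRConvex (branchOrder ℬ) B := by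
  intro a b c hab hbc ha hc
  by_contra hb
  exact branchOrder_asymm hab ((hℬ.branchOrder_right_iff hB hc ha hb).mp hbc)

end IsLaminar

end Laminar

theorem stmt_0 {X : Type*} (𝒜 : Set (Set X)) (h : IndepDimLEOne 𝒜) :
    ∃ r : X → X → Prop, IsStrictTotalOrder X r ∧
      ∀ A ∈ 𝒜, IsRConvex r A ∨ IsRConvex r Aᶜ := by
  obtain ⟨ℬ, hℬ, h𝒜ℬ⟩ := h.exists_isLaminar
  exact ⟨branchOrder ℬ, hℬ.isStrictTotalOrder_branchOrder, fun A hA =>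
    (h𝒜ℬ A hA).imp hℬ.isRConvex_branchOrder hℬ.isRConvex_branchOrder⟩
end

section
/- Let X be a set and let 𝒜 be a finite family of subsets of X that has independence dimension ≤ 1 with respect to X. Then there exists a linear order < on X such that for every A ∈ 𝒜, either A is a <-convex subset of X or X \ A is a <-convex subset of X. -/
namespace Set

variable {X : Type*}

def IsLaminar (𝒮 : Set (Set X)) : Prop :=
  ∀ A ∈ 𝒮, ∀ B ∈ 𝒮, Disjoint A B ∨ A ⊆ B ∨ B ⊆ A

def Crosses (A B : Set X) : Prop :=
  (A ∩ B).Nonempty ∧ (A \ B).Nonempty ∧ (B \ A).Nonempty ∧ (A ∪ B)ᶜ.Nonempty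

variable {A B : Set X}

theorem crosses_comm : A.Crosses B ↔ B.Crosses A := by
  rw [Crosses, Crosses, inter_comm, union_comm]
  tauto

theorem crosses_compl_left : Aᶜ.Crosses B ↔ A.Crosses B := by
  simp only [Crosses, sdiff_eq, compl_union, compl_compl, inter_comm]
  tauto

theorem crosses_compl_right : A.Crosses Bᶜ ↔ A.Crosses B := by
  rw [crosses_comm, crosses_compl_left, crosses_comm]

end Set

section FrontLex

variable {X : Type*}

def frontLex (M : Set X) (r : X → X → Prop) (x y : X) : Prop :=
  (x ∈ M ∧ y ∉ M) ∨ ((x ∈ M ↔ y ∈ M) ∧ r x y)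

variable {M : Set X} {r : X → X → Prop}

theorem frontLex_iff_of_mem_iff {x y : X} (h : x ∈ M ↔ y ∈ M) : frontLex M r x y ↔ r x y := by
  unfold frontLex
  tauto

instance frontLex.isStrictTotalOrder [IsStrictTotalOrder X r] :
    IsStrictTotalOrder X (frontLex M r) where
  trichotomous a b hab hba := by
    unfold frontLex at hab hba
    exact Std.Trichotomous.trichotomous (r := r) a b (by tauto) (by tauto)
  irrefl a h := by
    unfold frontLex at h
    exact irrefl_of r a (by tauto)
  trans a b c hab hbc := by
    unfold frontLex at *
    have := trans_of r (a := a) (b := b) (c := c)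
    tauto

theorem isRConvex_frontLex_self : IsRConvex (frontLex M r) M := by
  intro a b c _ hbc _ hc
  unfold frontLex at hbc
  tauto

theorem isRConvex_frontLex_compl : IsRConvex (frontLex M r) Mᶜ := by
  intro a b c hab _ ha _
  unfold frontLex at hab
  simp only [Set.mem_compl_iff] at *
  tauto

theorem IsRConvex.frontLex_of_subset_or_subset_compl {A : Set X} (hA : IsRConvex r A)
    (hAM : A ⊆ M ∨ A ⊆ Mᶜ) : IsRConvex (frontLex M r) A := by
  intro a b c hab hbc ha hc
  have hside : (a ∈ M ↔ b ∈ M) ∧ (b ∈ M ↔ c ∈ M) := by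
    rcases hAM with hAM | hAM
    · have hb := isRConvex_frontLex_self a b c hab hbc (hAM ha) (hAM hc)
      exact ⟨iff_of_true (hAM ha) hb, iff_of_true hb (hAM hc)⟩
    · have hb := isRConvex_frontLex_compl a b c hab hbc (hAM ha) (hAM hc)
      exact ⟨iff_of_false (hAM ha) hb, iff_of_false hb (hAM hc)⟩
  exact hA a b c ((frontLex_iff_of_mem_iff hside.1).1 hab) ((frontLex_iff_of_mem_iff hside.2).1 hbc)
    ha hc

end FrontLex

theorem Set.IsLaminar.exists_isStrictTotalOrder_isRConvex {X : Type*} {𝒮 : Set (Set X)}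
    (h𝒮 : 𝒮.IsLaminar) (hfin : 𝒮.Finite) :
    ∃ r : X → X → Prop, IsStrictTotalOrder X r ∧ ∀ A ∈ 𝒮, IsRConvex r A := by
  lift 𝒮 to Finset (Set X) using hfin
  induction 𝒮 using Finset.strongInduction with
  | H s ih =>
    obtain rfl | hne := s.eq_empty_or_nonempty
    · exact ⟨WellOrderingRel, inferInstance, by simp⟩
    obtain ⟨M, hM⟩ := s.exists_maximal hne
    obtain ⟨r, hr, hconv⟩ := ih (s.erase M) (Finset.erase_ssubset hM.prop)
      fun A hA B hB => h𝒮 A (Finset.mem_of_mem_erase hA) B (Finset.mem_of_mem_erase hB)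
    refine ⟨frontLex M r, inferInstance, fun A hA => ?_⟩
    obtain rfl | hAM := eq_or_ne A M
    · exact isRConvex_frontLex_self
    refine (hconv A (Finset.mem_erase.2 ⟨hAM, hA⟩)).frontLex_of_subset_or_subset_compl ?_
    rcases h𝒮 A hA M hM.prop with hdisj | hsub | hsup
    · exact Or.inr hdisj.subset_compl_right
    · exact Or.inl hsub
    · exact Or.inl (hM.2 hA hsup)

theorem indepDimLEOne_iff {X : Type*} {𝒜 : Set (Set X)} :
    IndepDimLEOne 𝒜 ↔ ∀ A ∈ 𝒜, ∀ B ∈ 𝒜, ¬A.Crosses B := by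
  simp only [IndepDimLEOne, Set.Crosses, Set.nonempty_iff_ne_empty, not_and_or, not_not]

namespace IndepDimLEOne

variable {X : Type*} {𝒜 : Set (Set X)}

theorem union_image_compl (h : IndepDimLEOne 𝒜) : IndepDimLEOne (𝒜 ∪ compl '' 𝒜) := by
  rw [indepDimLEOne_iff] at h ⊢
  rintro _ (hA | ⟨A, hA, rfl⟩) _ (hB | ⟨B, hB, rfl⟩) <;>
    simpa only [Set.crosses_compl_left, Set.crosses_compl_right] using h _ hA _ hB

theorem mono {ℬ : Set (Set X)} (h : IndepDimLEOne 𝒜) (hℬ : ℬ ⊆ 𝒜) : IndepDimLEOne ℬ :=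
  fun A hA B hB => h A (hℬ hA) B (hℬ hB)

theorem isLaminar_of_forall_notMem (h : IndepDimLEOne 𝒜) {x : X} (hx : ∀ A ∈ 𝒜, x ∉ A) :
    𝒜.IsLaminar := by
  intro A hA B hB
  rcases h A hA B hB with h | h | h | h
  · exact Or.inl (Set.disjoint_iff_inter_eq_empty.2 h)
  · exact Or.inr (Or.inl (Set.sdiff_eq_empty.1 h))
  · exact Or.inr (Or.inr (Set.sdiff_eq_empty.1 h))
  · exact (Set.eq_empty_iff_forall_notMem.1 h x (by simp [hx A hA, hx B hB])).elim

end IndepDimLEOne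

theorem stmt_1 {X : Type*} (𝒜 : Set (Set X)) (hfin : 𝒜.Finite) (h : IndepDimLEOne 𝒜) :
    ∃ r : X → X → Prop, IsStrictTotalOrder X r ∧
      ∀ A ∈ 𝒜, IsRConvex r A ∨ IsRConvex r Aᶜ := by
  cases isEmpty_or_nonempty X with
  | inl _ => exact ⟨WellOrderingRel, inferInstance, fun A _ => Or.inl fun a => isEmptyElim a⟩
  | inr hX =>
    obtain ⟨x₀⟩ := hX
    let ℬ := {B ∈ 𝒜 ∪ compl '' 𝒜 | x₀ ∉ B}
    have hℬ : ℬ.IsLaminar :=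
      (h.union_image_compl.mono (Set.sep_subset _ _)).isLaminar_of_forall_notMem fun B hB => hB.2
    obtain ⟨r, hr, hconv⟩ := hℬ.exists_isStrictTotalOrder_isRConvex
      ((hfin.union (hfin.image compl)).subset (Set.sep_subset _ _))
    refine ⟨r, hr, fun A hA => ?_⟩
    by_cases hx₀ : x₀ ∈ A
    · exact Or.inr (hconv Aᶜ ⟨Or.inr ⟨A, hA, rfl⟩, not_not_intro hx₀⟩)
    · exact Or.inl (hconv A ⟨Or.inl hA, hx₀⟩)
end

section
/- Let X be a set and let 𝒜 be a finite family of subsets of X such that there exist no A, B ∈ 𝒜 with A ∩ B ≠ ∅, A \ B ≠ ∅, and B \ A ≠ ∅ (i.e., any two members of 𝒜 are either disjoint or one contains the other). Then there exists a linear order < on X such that every A ∈ 𝒜 is a <-convex subset of X. -/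
section Squash

variable {X : Type*}

theorem InvImage.isStrictTotalOrder {Y : Type*} {r : Y → Y → Prop} [IsStrictTotalOrder Y r]
    {f : X → Y} (hf : f.Injective) : IsStrictTotalOrder X (InvImage r f) where
  toTrichotomous := InvImage.trichotomous hf
  irrefl x := irrefl_of r (f x)
  trans _ _ _ := _root_.trans

variable {r : X → X → Prop} {A B : Set X} {a x y z : X}

open Classical in
noncomputable def squash (A : Set X) (a : X) (x : X) : X :=
  if x ∈ A then a else x

theorem squash_of_mem (hx : x ∈ A) : squash A a x = a :=
  if_pos hx

theorem squash_of_notMem (hx : x ∉ A) : squash A a x = x :=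
  if_neg hx

theorem squash_eq_squash_iff (ha : a ∈ A) :
    squash A a x = squash A a y ↔ (x ∈ A ∧ y ∈ A) ∨ x = y := by
  unfold squash
  split_ifs <;> grind

def squashOrder (r : X → X → Prop) (A : Set X) (a : X) : X → X → Prop :=
  InvImage (Prod.Lex r r) fun x => (squash A a x, x)

instance [IsStrictTotalOrder X r] : IsStrictTotalOrder X (squashOrder r A a) :=
  have : IsStrictTotalOrder (X × X) (Prod.Lex r r) := {}
  InvImage.isStrictTotalOrder fun _ _ h => congrArg Prod.snd h

theorem squashOrder_iff_of_mem [Std.Irrefl r] (hx : x ∈ A) (hy : y ∈ A) :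
    squashOrder r A a x y ↔ r x y := by
  simp [squashOrder, InvImage, Prod.lex_iff, squash_of_mem hx, squash_of_mem hy, irrefl_of r a]

theorem rel_squash_of_squashOrder [Std.Irrefl r] (ha : a ∈ A)
    (hxy : squashOrder r A a x y) (hA : x ∉ A ∨ y ∉ A) :
    r (squash A a x) (squash A a y) := by
  rcases Prod.lex_iff.mp hxy with h | ⟨heq, hr⟩
  · exact h
  · rcases (squash_eq_squash_iff ha).mp heq with ⟨hx, hy⟩ | rfl
    · exact absurd hA (by simp [hx, hy])
    · exact absurd hr (irrefl x)

theorem isRConvex_squashOrder_self [IsStrictOrder X r] (ha : a ∈ A) :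
    IsRConvex (squashOrder r A a) A := by
  intro x y z hxy hyz hx hz
  by_contra hy
  have hay := rel_squash_of_squashOrder ha hxy (.inr hy)
  have hya := rel_squash_of_squashOrder ha hyz (.inl hy)
  rw [squash_of_mem hx, squash_of_notMem hy] at hay
  rw [squash_of_mem hz, squash_of_notMem hy] at hya
  exact asymm hay hya

theorem IsRConvex.squashOrder_of_subset [IsStrictOrder X r] (hB : IsRConvex r B) (ha : a ∈ A)
    (hBA : B ⊆ A) : IsRConvex (squashOrder r A a) B := by
  intro x y z hxy hyz hx hz
  have hy : y ∈ A := isRConvex_squashOrder_self ha x y z hxy hyz (hBA hx) (hBA hz)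
  exact hB x y z ((squashOrder_iff_of_mem (hBA hx) hy).mp hxy)
    ((squashOrder_iff_of_mem hy (hBA hz)).mp hyz) hx hz

theorem IsRConvex.squashOrder_of_not_split [IsStrictOrder X r] (hB : IsRConvex r B)
    (ha : a ∈ A) (hAB : A ⊆ B ∨ Disjoint A B) : IsRConvex (squashOrder r A a) B := by
  have hconst : ∀ x ∈ A, ∀ y ∈ A, x ∈ B → y ∈ B := fun x hx y hy hxB =>
    hAB.elim (fun h => h hy) fun h => absurd hxB (h.notMem_of_mem_left hx)
  have hsquash : ∀ x, squash A a x ∈ B ↔ x ∈ B := by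
    intro x
    by_cases hx : x ∈ A
    · rw [squash_of_mem hx]
      exact ⟨hconst a ha x hx, hconst x hx a ha⟩
    · rw [squash_of_notMem hx]
  intro x y z hxy hyz hx hz
  by_cases hxyA : x ∈ A ∧ y ∈ A
  · exact hconst x hxyA.1 y hxyA.2 hx
  by_cases hyzA : y ∈ A ∧ z ∈ A
  · exact hconst z hyzA.2 y hyzA.1 hz
  rw [not_and_or] at hxyA hyzA
  exact (hsquash y).mp <| hB _ _ _ (rel_squash_of_squashOrder ha hxy hxyA)
    (rel_squash_of_squashOrder ha hyz hyzA) ((hsquash x).mpr hx) ((hsquash z).mpr hz)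

theorem exists_isStrictTotalOrder_isRConvex_preserving (r : X → X → Prop)
    [IsStrictTotalOrder X r] (A : Set X) : ∃ r' : X → X → Prop, IsStrictTotalOrder X r' ∧ IsRConvex r' A ∧
      ∀ B, IsRConvex r B → Disjoint A B ∨ A ⊆ B ∨ B ⊆ A → IsRConvex r' B := by
  rcases A.eq_empty_or_nonempty with rfl | ⟨a, ha⟩
  · exact ⟨r, inferInstance, fun _ _ _ _ _ h => h.elim, fun _ hB _ => hB⟩
  refine ⟨squashOrder r A a, inferInstance, isRConvex_squashOrder_self ha, ?_⟩
  rintro B hB (hAB | hAB | hBA)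
  · exact hB.squashOrder_of_not_split ha (.inr hAB)
  · exact hB.squashOrder_of_not_split ha (.inl hAB)
  · exact hB.squashOrder_of_subset ha hBA

end Squash

theorem stmt_2 {X : Type*} (𝒜 : Set (Set X)) (hfin : 𝒜.Finite)
    (h : ∀ A ∈ 𝒜, ∀ B ∈ 𝒜, A ∩ B = ∅ ∨ A \ B = ∅ ∨ B \ A = ∅) :
    ∃ r : X → X → Prop, IsStrictTotalOrder X r ∧ ∀ A ∈ 𝒜, IsRConvex r A := by
  induction 𝒜, hfin using Set.Finite.induction_on with
  | empty => exact ⟨WellOrderingRel, inferInstance, by simp⟩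
  | @insert A 𝒜 _ _ ih =>
    obtain ⟨r, hr, hconv⟩ :=
      ih fun B hB C hC => h B (Set.mem_insert_of_mem A hB) C (Set.mem_insert_of_mem A hC)
    obtain ⟨r', hr', hA, hpreserve⟩ := exists_isStrictTotalOrder_isRConvex_preserving r A
    refine ⟨r', hr', ?_⟩
    rintro B (rfl | hB)
    · exact hA
    refine hpreserve B (hconv B hB) ?_
    simpa only [Set.disjoint_iff_inter_eq_empty, Set.sdiff_eq_empty] using
      h A (Set.mem_insert A 𝒜) B (Set.mem_insert_of_mem A hB)
end

section
/- Let X be a set, let < be a linear order on X, let K < ω, and let A_0, …, A_{K−1} be subsets of X such that for each i < K, either A_i or X \ A_i is a <-convex subset of X. Then every set belonging to the Boolean algebra of subsets of X generated by {A_0, …, A_{K−1}} (the smallest collection of subsets of X containing A_0, …, A_{K−1} and closed under complements and finite unions and intersections) is a union of at most K + 1 <-convex subsets of X. -/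
/-- `S` is a union of at most `K` `r`-convex subsets of `X`. -/
def UnionOfAtMostConvex {X : Type*} (r : X → X → Prop) (K : ℕ) (S : Set X) : Prop :=
  ∃ C : Fin K → Set X, (∀ i, IsRConvex r (C i)) ∧ S = ⋃ i, C i

/-- The Boolean algebra of subsets of `X` generated by a family `G`: the smallest
collection containing `G` and closed under complements and (binary) unions and
intersections. -/
inductive GenBoolAlg {X : Type*} (G : Set (Set X)) : Set X → Prop
  | base {A : Set X} : A ∈ G → GenBoolAlg G A
  | compl {A : Set X} : GenBoolAlg G A → GenBoolAlg G Aᶜ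
  | union {A B : Set X} : GenBoolAlg G A → GenBoolAlg G B → GenBoolAlg G (A ∪ B)
  | inter {A B : Set X} : GenBoolAlg G A → GenBoolAlg G B → GenBoolAlg G (A ∩ B)

/-!
Along a monotone finite sequence of points, a convex set (or the complement of one) can change
membership at most twice: once on entering and once on leaving. A set in the Boolean algebra
generated by `A 0, …, A (K - 1)` can change membership only where one of the generators does,
hence at most `2 K` times. On the other hand, if `S` is not a union of `K + 1` convex sets it has
`K + 2` order-connected components; points from these, interleaved with points outside `S` lying
between consecutive ones, form a monotone sequence along which `S` changes membership `2 K + 2`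
times.
-/

open Set

section

variable {X : Type*}

theorem isRConvex_empty (r : X → X → Prop) : IsRConvex r ∅ :=
  fun _ _ _ _ _ ha _ => ha

theorem isRConvex_lt_iff_ordConnected [PartialOrder X] {S : Set X} :
    IsRConvex (· < ·) S ↔ S.OrdConnected := by
  refine ⟨fun h => ⟨fun a ha c hc b ⟨hab, hbc⟩ => ?_⟩, fun h a b c hab hbc ha hc =>
    h.out ha hc ⟨hab.le, hbc.le⟩⟩
  rcases hab.lt_or_eq with hab | rfl
  · rcases hbc.lt_or_eq with hbc | rfl
    · exact h a b c hab hbc ha hc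
    · exact hc
  · exact ha

theorem unionOfAtMostConvex_biUnion {ι : Type*} (r : X → X → Prop) {m : ℕ} (s : Finset ι)
    (hs : s.card ≤ m) {C : ι → Set X} (hC : ∀ i ∈ s, IsRConvex r (C i)) :
    UnionOfAtMostConvex r m (⋃ i ∈ s, C i) := by
  classical
  induction s using Finset.induction_on generalizing m with
  | empty => exact ⟨fun _ => ∅, fun _ => isRConvex_empty r, by simp⟩
  | insert a s ha ih =>
    rw [Finset.card_insert_of_notMem ha] at hs
    obtain ⟨m, rfl⟩ : ∃ n, m = n + 1 := Nat.exists_eq_add_one.2 (by omega)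
    obtain ⟨D, hD, hsD⟩ := ih (m := m) (by omega) fun i hi => hC i (Finset.mem_insert_of_mem hi)
    refine ⟨Fin.cons (C a) D, Fin.cases (hC a (Finset.mem_insert_self a s)) hD, ?_⟩
    ext x
    simp [hsD]

theorem unionOfAtMostConvex_or_exists_separated [LinearOrder X] (m : ℕ) (S : Set X) :
    UnionOfAtMostConvex (· < ·) m S ∨
      ∃ x : Fin (m + 1) → X, (∀ i, x i ∈ S) ∧
        ∀ i : Fin m, ∃ y ∉ S, x i.castSucc ≤ y ∧ y ≤ x i.succ := by
  set T := S.ordConnectedSection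
  by_cases hT : T.encard ≤ m
  · left
    have hTfin := finite_of_encard_le_coe hT
    have hS : S = ⋃ x ∈ hTfin.toFinset, S.ordConnectedComponent x := by
      refine Subset.antisymm (fun z hz => ?_)
        (iUnion₂_subset fun _ _ => ordConnectedComponent_subset)
      refine mem_biUnion (x := ordConnectedProj S ⟨z, hz⟩) ?_ ?_
      · exact hTfin.mem_toFinset.2 (mem_range_self _)
      · exact mem_ordConnectedComponent_ordConnectedProj S ⟨z, hz⟩
    rw [hS]
    refine unionOfAtMostConvex_biUnion _ _ ?_ fun x _ =>
      isRConvex_lt_iff_ordConnected.2 inferInstance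
    rwa [hTfin.encard_eq_coe_toFinset_card, Nat.cast_le] at hT
  · right
    obtain ⟨t, htT, htcard⟩ := exists_subset_encard_eq (Order.add_one_le_of_lt (not_le.1 hT))
    have htfin := finite_of_encard_eq_coe htcard
    have hcard : htfin.toFinset.card = m + 1 := by
      rw [← Nat.cast_inj (R := ℕ∞), ← htfin.encard_eq_coe_toFinset_card, htcard, Nat.cast_succ]
    set x := htfin.toFinset.orderEmbOfFin hcard
    have hxT : ∀ i, x i ∈ T := fun i =>
      htT (htfin.mem_toFinset.1 (htfin.toFinset.orderEmbOfFin_mem hcard i))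
    refine ⟨x, fun i => ordConnectedSection_subset (hxT i), fun i => ?_⟩
    have hlt : x i.castSucc < x i.succ := x.strictMono Fin.castSucc_lt_succ
    have hnot : ¬ uIcc (x i.castSucc) (x i.succ) ⊆ S := fun h =>
      hlt.ne (eq_of_mem_ordConnectedSection_of_uIcc_subset (hxT _) (hxT _) h)
    obtain ⟨y, hy, hyS⟩ := not_subset.1 hnot
    rw [uIcc_of_le hlt.le] at hy
    exact ⟨y, hyS, hy⟩

theorem exists_alternating_of_separated [Preorder X] {S : Set X} {m : ℕ} {x : Fin (m + 1) → X}
    (hxS : ∀ i, x i ∈ S) (hsep : ∀ i : Fin m, ∃ y ∉ S, x i.castSucc ≤ y ∧ y ≤ x i.succ) :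
    ∃ p : Fin (2 * m + 1) → X, Monotone p ∧ ∀ j, p j ∈ S ↔ Even (j : ℕ) := by
  choose y hyS hy using hsep
  let p : Fin (2 * m + 1) → X := fun j =>
    if h : (j : ℕ) % 2 = 0 then x ⟨j / 2, by omega⟩ else y ⟨j / 2, by omega⟩
  refine ⟨p, Fin.monotone_iff_le_succ.2 fun j => ?_, fun j => ?_⟩
  · obtain ⟨i, hi | hi⟩ := Nat.even_or_odd' j
    · have hi' : i < m := by omega
      convert (hy ⟨i, hi'⟩).1 using 1 <;> simp [p, hi, Nat.mul_add_div]
    · have hi' : i < m := by omega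
      have hsucc : 2 * i + 1 + 1 = 2 * (i + 1) := by ring
      convert (hy ⟨i, hi'⟩).2 using 1 <;> simp [p, hi, hsucc, Nat.mul_add_div]
  · simp only [p, Nat.even_iff]
    split_ifs with h
    · simpa [h] using hxS _
    · simpa [h] using hyS _

def crossings {n : ℕ} (p : Fin (n + 1) → X) (A : Set X) : Set (Fin n) :=
  {j | ¬(p j.castSucc ∈ A ↔ p j.succ ∈ A)}

@[simp]
theorem crossings_compl {n : ℕ} (p : Fin (n + 1) → X) (A : Set X) :
    crossings p Aᶜ = crossings p A := by
  ext j
  simp [crossings, not_iff_not]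

section Crossings

variable [Preorder X] {n : ℕ} {p : Fin (n + 1) → X} {A : Set X}

theorem Set.OrdConnected.subsingleton_entries (hA : A.OrdConnected) (hp : Monotone p) :
    {j : Fin n | p j.castSucc ∉ A ∧ p j.succ ∈ A}.Subsingleton := by
  have entry_not_lt : ∀ j k : Fin n,
      p j.castSucc ∉ A ∧ p j.succ ∈ A → p k.castSucc ∉ A ∧ p k.succ ∈ A →
      ¬ j < k := fun j k hj hk hjk =>
    hk.1 (hA.out hj.2 hk.2 ⟨hp (Fin.succ_le_castSucc_iff.2 hjk), hp (Fin.castSucc_le_succ k)⟩)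
  exact fun j hj k hk =>
    le_antisymm (not_lt.1 (entry_not_lt k j hk hj)) (not_lt.1 (entry_not_lt j k hj hk))

theorem Set.OrdConnected.subsingleton_exits (hA : A.OrdConnected) (hp : Monotone p) :
    {j : Fin n | p j.castSucc ∈ A ∧ p j.succ ∉ A}.Subsingleton := by
  have exit_not_lt : ∀ j k : Fin n,
      p j.castSucc ∈ A ∧ p j.succ ∉ A → p k.castSucc ∈ A ∧ p k.succ ∉ A →
      ¬ j < k := fun j k hj hk hjk =>
    hj.2 (hA.out hj.1 hk.1 ⟨hp (Fin.castSucc_le_succ j), hp (Fin.succ_le_castSucc_iff.2 hjk)⟩)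
  exact fun j hj k hk =>
    le_antisymm (not_lt.1 (exit_not_lt k j hk hj)) (not_lt.1 (exit_not_lt j k hj hk))

theorem Set.OrdConnected.ncard_crossings_le_two (hA : A.OrdConnected) (hp : Monotone p) :
    (crossings p A).ncard ≤ 2 := by
  have hsplit : crossings p A =
      {j | p j.castSucc ∉ A ∧ p j.succ ∈ A} ∪ {j | p j.castSucc ∈ A ∧ p j.succ ∉ A} := by
    ext j
    simp only [crossings, mem_ofPred_eq, mem_union]
    tauto
  rw [hsplit]
  exact (ncard_union_le _ _).trans (add_le_add
    (ncard_le_one_iff_subsingleton.2 (hA.subsingleton_entries hp))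
    (ncard_le_one_iff_subsingleton.2 (hA.subsingleton_exits hp)))

end Crossings

theorem GenBoolAlg.mem_iff_of_forall_mem_iff {ι : Type*} {A : ι → Set X} {S : Set X}
    (hS : GenBoolAlg (range A) S) {x y : X} (hxy : ∀ i, x ∈ A i ↔ y ∈ A i) :
    x ∈ S ↔ y ∈ S := by
  induction hS with
  | base h => obtain ⟨i, rfl⟩ := h; exact hxy i
  | compl _ ih => simp only [mem_compl_iff, ih]
  | union _ _ ih₁ ih₂ => simp only [mem_union, ih₁, ih₂]
  | inter _ _ ih₁ ih₂ => simp only [mem_inter_iff, ih₁, ih₂]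

theorem GenBoolAlg.crossings_subset {ι : Type*} {A : ι → Set X} {S : Set X}
    (hS : GenBoolAlg (range A) S) {n : ℕ} (p : Fin (n + 1) → X) :
    crossings p S ⊆ ⋃ i, crossings p (A i) := by
  intro j hj
  by_contra h
  simp only [crossings, mem_iUnion, mem_ofPred_eq, not_exists, not_not] at h
  exact hj (hS.mem_iff_of_forall_mem_iff h)

theorem crossings_eq_univ_of_alternating {S : Set X} {n : ℕ} {p : Fin (n + 1) → X}
    (h : ∀ j, p j ∈ S ↔ Even (j : ℕ)) : crossings p S = univ := by
  ext j
  simp only [crossings, h, Fin.val_castSucc, Fin.val_succ, Nat.even_add_one, iff_not_self,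
    not_false_eq_true, mem_ofPred_eq, mem_univ]

end

theorem stmt_3 {X : Type*} [LinearOrder X] (K : ℕ) (A : Fin K → Set X)
    (hA : ∀ i, IsRConvex (· < ·) (A i) ∨ IsRConvex (· < ·) (A i)ᶜ) :
    ∀ S : Set X, GenBoolAlg (Set.range A) S →
      UnionOfAtMostConvex (· < ·) (K + 1) S := by
  intro S hS
  refine (unionOfAtMostConvex_or_exists_separated (K + 1) S).resolve_right ?_
  rintro ⟨x, hxS, hsep⟩
  obtain ⟨p, hp, halt⟩ := exists_alternating_of_separated hxS hsep
  have hcross : ∀ i, (crossings p (A i)).ncard ≤ 2 := fun i => by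
    rcases hA i with h | h
    · exact (isRConvex_lt_iff_ordConnected.1 h).ncard_crossings_le_two hp
    · simpa using (isRConvex_lt_iff_ordConnected.1 h).ncard_crossings_le_two hp
  have : 2 * (K + 1) ≤ 2 * K := calc
    2 * (K + 1) = (crossings p S).ncard := by
      simp [crossings_eq_univ_of_alternating halt]
    _ ≤ (⋃ i, crossings p (A i)).ncard := ncard_le_ncard (hS.crossings_subset p)
    _ ≤ ∑ i, (crossings p (A i)).ncard := ncard_iUnion_le_of_fintype _
    _ ≤ ∑ _i : Fin K, 2 := Finset.sum_le_sum fun i _ => hcross i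
    _ = 2 * K := by simp [mul_comm]
  omega
end

section
/- Let M be an L-structure. Suppose that for each partitioned L-formula φ(x; ȳ) (with x a single variable) there exists K_φ < ω such that for every finite collection {φ_i(x; b̄_i) : i < n} of partitioned L-formulas φ_i(x; ȳ_i) with parameters b̄_i from M, there exists a linear order < on M such that for each i < n, the set φ_i(M; b̄_i) is a union of at most K_{φ_i} <-convex subsets of M. Then M is convexly orderable. -/
/-!
Strict total orders on `M` are points of the compact space `M × M → Bool`. For a linear order,
`S` is a union of at most `K` convex sets iff there is no chain `x₀ < c₀ < x₁ < ⋯ < c_{K-1} < x_K`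
with all `xᵢ ∈ S` and all `cᵢ ∉ S`: one way by pigeonhole, the other by counting the
order-connected components of `S`. Being a strict total order, and admitting no such chain for a
given `S`, are conditions on finitely many coordinates at a time, hence closed; the hypothesis is
the finite intersection property for these closed sets, and a point of their intersection is the
required order.
-/

open FirstOrder Language

/-- `φ(M; b̄)`, the set defined in `M` by the partitioned formula `φ(x; ȳ)` with
parameters `b̄`. -/
def realizeSet (L : Language) (M : Type*) [L.Structure M] {m : ℕ}
    (φ : L.Formula (Unit ⊕ Fin m)) (b : Fin m → M) : Set M :=
  {a : M | φ.Realize (Sum.elim (fun _ => a) b)}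

/-- An `L`-structure `M` is convexly orderable if there is a linear order on `M` such
that every partitioned formula `φ(x; ȳ)` admits a uniform finite bound `K` such that
each `φ(M; b̄)` is a union of at most `K` convex sets. -/
def ConvexlyOrderable (L : Language) (M : Type*) [L.Structure M] : Prop :=
  ∃ r : M → M → Prop, IsStrictTotalOrder M r ∧
    ∀ (m : ℕ) (φ : L.Formula (Unit ⊕ Fin m)), ∃ K : ℕ,
      ∀ b : Fin m → M, UnionOfAtMostConvex r K (realizeSet L M φ b)

def HasAlternatingChain {X : Type*} (r : X → X → Prop) (S : Set X) (K : ℕ) : Prop :=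
  ∃ (x : Fin (K + 1) → X) (c : Fin K → X), (∀ i, x i ∈ S) ∧ (∀ i, c i ∉ S) ∧
    ∀ i, r (x i.castSucc) (c i) ∧ r (c i) (x i.succ)

section Convexity

variable {X : Type*}

theorem Set.OrdConnected.isRConvex [Preorder X] {S : Set X} (hS : S.OrdConnected) :
    IsRConvex (· < ·) S :=
  fun _ _ _ hab hbc ha hc => hS.out ha hc ⟨hab.le, hbc.le⟩

theorem unionOfAtMostConvex_iUnion {r : X → X → Prop} {ι : Type*} [Finite ι] {K : ℕ}
    (C : ι → Set X) (hC : ∀ i, IsRConvex r (C i)) (hK : Nat.card ι ≤ K) :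
    UnionOfAtMostConvex r K (⋃ i, C i) := by
  set e := Finite.equivFin ι
  refine ⟨fun j => if h : (j : ℕ) < Nat.card ι then C (e.symm ⟨j, h⟩) else ∅, fun j => ?_, ?_⟩
  · dsimp only
    split_ifs
    · exact hC _
    · exact fun _ _ _ _ _ ha => ha.elim
  · ext a
    simp only [Set.mem_iUnion]
    constructor
    · rintro ⟨i, hi⟩
      refine ⟨⟨e i, (e i).2.trans_le hK⟩, ?_⟩
      simpa [(e i).2] using hi
    · rintro ⟨j, hj⟩
      split_ifs at hj
      exacts [⟨_, hj⟩, hj.elim]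

theorem UnionOfAtMostConvex.not_hasAlternatingChain [Preorder X] {K : ℕ} {S : Set X}
    (hS : UnionOfAtMostConvex (· < ·) K S) : ¬ HasAlternatingChain (· < ·) S K := by
  rintro ⟨x, c, hxS, hcS, hxc⟩
  obtain ⟨C, hC, rfl⟩ := hS
  have hx : StrictMono x := Fin.strictMono_iff_lt_succ.2 fun i => (hxc i).1.trans (hxc i).2
  choose t ht using fun i => Set.mem_iUnion.1 (hxS i)
  obtain ⟨i, j, hij, htij⟩ := Fintype.exists_ne_map_eq_of_card_lt t (by simp)
  wlog hlt : i < j generalizing i j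
  · exact this j i hij.symm htij.symm (hij.symm.lt_of_le (not_lt.1 hlt))
  set k : Fin K := ⟨i, by omega⟩
  have hk : x k.succ ≤ x j := hx.monotone (Fin.le_def.2 (by simp only [Fin.val_succ, k]; omega))
  exact hcS k (Set.mem_iUnion.2 ⟨t i, hC _ _ _ _ (hxc k).1 ((hxc k).2.trans_le hk) (ht i)
    (htij ▸ ht j)⟩)

theorem hasAlternatingChain_of_not_Icc_subset [PartialOrder X] {K : ℕ} {S : Set X}
    {x : Fin (K + 1) → X} (hxS : ∀ i, x i ∈ S)
    (hgap : ∀ i : Fin K, ¬ Set.Icc (x i.castSucc) (x i.succ) ⊆ S) :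
    HasAlternatingChain (· < ·) S K := by
  choose c hc hcS using fun i => Set.not_subset.1 (hgap i)
  refine ⟨x, c, hxS, hcS, fun i => ⟨(hc i).1.lt_of_ne ?_, (hc i).2.lt_of_ne ?_⟩⟩
  · exact fun h => hcS i (h ▸ hxS _)
  · exact fun h => hcS i (h ▸ hxS _)

theorem Set.iUnion_ordConnectedComponent_ordConnectedSection [LinearOrder X] (S : Set X) :
    ⋃ t : S.ordConnectedSection, S.ordConnectedComponent t = S := by
  refine Set.Subset.antisymm (Set.iUnion_subset fun _ => Set.ordConnectedComponent_subset)
    fun x hx => Set.mem_iUnion.2 ?_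
  have hproj : S.ordConnectedProj ⟨x, hx⟩ ∈ S.ordConnectedSection := ⟨⟨x, hx⟩, rfl⟩
  exact ⟨⟨_, hproj⟩, Set.mem_ordConnectedComponent_ordConnectedProj S ⟨x, hx⟩⟩

theorem hasAlternatingChain_of_subset_ordConnectedSection [LinearOrder X] {K : ℕ} {S : Set X}
    {F : Finset X} (hF : ↑F ⊆ S.ordConnectedSection) (hK : K + 1 ≤ F.card) :
    HasAlternatingChain (· < ·) S K := by
  set y := F.orderEmbOfFin rfl
  have hyT : ∀ i, y i ∈ S.ordConnectedSection := fun i => hF (F.orderEmbOfFin_mem rfl i)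
  refine hasAlternatingChain_of_not_Icc_subset (x := fun i => y (Fin.castLE hK i))
    (fun i => Set.ordConnectedSection_subset (hyT _)) fun i hsub => ?_
  have hlt : y (Fin.castLE hK i.castSucc) < y (Fin.castLE hK i.succ) :=
    y.strictMono ((Fin.castLE_lt_castLE_iff hK).2 i.castSucc_lt_succ)
  rw [← Set.uIcc_of_le hlt.le] at hsub
  exact hlt.ne (Set.eq_of_mem_ordConnectedSection_of_uIcc_subset (hyT _) (hyT _) hsub)

theorem unionOfAtMostConvex_of_not_hasAlternatingChain [LinearOrder X] {K : ℕ} {S : Set X}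
    (hS : ¬ HasAlternatingChain (· < ·) S K) : UnionOfAtMostConvex (· < ·) K S := by
  have hcard : ∀ F : Finset X, ↑F ⊆ S.ordConnectedSection → F.card ≤ K := fun F hF =>
    not_lt.1 fun hK => hS (hasAlternatingChain_of_subset_ordConnectedSection hF hK)
  have hfin : S.ordConnectedSection.Finite := Set.not_infinite.1 fun hinf => by
    obtain ⟨F, hF, hFK⟩ := hinf.exists_subset_card_eq (K + 1)
    exact (hcard F hF).not_gt (by omega)
  have : Finite S.ordConnectedSection := hfin
  rw [← S.iUnion_ordConnectedComponent_ordConnectedSection]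
  refine unionOfAtMostConvex_iUnion _ (fun _ => Set.OrdConnected.isRConvex inferInstance) ?_
  rw [Nat.card_eq_card_finite_toFinset hfin]
  exact hcard _ hfin.coe_toFinset.subset

theorem unionOfAtMostConvex_iff_not_hasAlternatingChain [LinearOrder X] {K : ℕ} {S : Set X} :
    UnionOfAtMostConvex (· < ·) K S ↔ ¬ HasAlternatingChain (· < ·) S K :=
  ⟨UnionOfAtMostConvex.not_hasAlternatingChain, unionOfAtMostConvex_of_not_hasAlternatingChain⟩

theorem IsStrictTotalOrder.unionOfAtMostConvex_iff {r : X → X → Prop} (hr : IsStrictTotalOrder X r)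
    {K : ℕ} {S : Set X} : UnionOfAtMostConvex r K S ↔ ¬ HasAlternatingChain r S K := by
  classical
  let := linearOrderOfSTO r
  exact unionOfAtMostConvex_iff_not_hasAlternatingChain

end Convexity

section Compactness

theorem isClosed_setOf_forall_comp {α β ι κ : Type*} [TopologicalSpace β] [DiscreteTopology β]
    [Finite ι] (p : κ → ι → α) (Q : κ → (ι → β) → Prop) :
    IsClosed {f : α → β | ∀ k, Q k (f ∘ p k)} := by
  simp only [Set.ofPred_forall]
  exact isClosed_iInter fun k => (isClosed_discrete {g | Q k g}).preimage
    (continuous_pi fun i => continuous_apply (p k i))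

variable {X : Type*}

theorem isClosed_setOf_isStrictTotalOrder :
    IsClosed {f : X × X → Bool | IsStrictTotalOrder X fun a b => f (a, b)} := by
  convert isClosed_setOf_forall_comp
    (fun t : X × X × X => ![(t.1, t.1), (t.1, t.2.1), (t.2.1, t.2.2), (t.1, t.2.2), (t.2.1, t.1)])
    (fun t g => g 0 = false ∧ (g 1 → g 2 → g 3) ∧ (¬ g 1 → ¬ g 4 → t.1 = t.2.1)) using 1
  ext f
  simp only [Set.mem_ofPred_eq, Prod.forall, Function.comp_apply]
  constructor
  · intro h a b c
    exact ⟨by simpa using h.irrefl a, h.trans a b c, h.trichotomous a b⟩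
  · intro h
    exact { irrefl := fun a => by simpa using (h a a a).1, trans := fun a b c => (h a b c).2.1,
            trichotomous := fun a b => (h a b a).2.2 }

theorem isClosed_setOf_not_hasAlternatingChain (S : Set X) (K : ℕ) :
    IsClosed {f : X × X → Bool | ¬ HasAlternatingChain (fun a b => f (a, b)) S K} := by
  refine (congrArg IsClosed ?_).mpr <| isClosed_setOf_forall_comp
    (fun xc : (Fin (K + 1) → X) × (Fin K → X) =>
      Sum.elim (fun i => (xc.1 i.castSucc, xc.2 i)) fun i => (xc.2 i, xc.1 i.succ))
    (fun xc (g : Fin K ⊕ Fin K → Bool) =>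
      ¬ ((∀ i, xc.1 i ∈ S) ∧ (∀ i, xc.2 i ∉ S) ∧ ∀ i, g (.inl i) ∧ g (.inr i)))
  ext f
  simp only [HasAlternatingChain, Set.mem_ofPred_eq, not_exists, Prod.forall, Function.comp_apply,
    Sum.elim_inl, Sum.elim_inr]

theorem exists_isStrictTotalOrder_forall_unionOfAtMostConvex {ι : Type*} (S : ι → Set X)
    (K : ι → ℕ) (h : ∀ u : Finset ι, ∃ r : X → X → Prop,
      IsStrictTotalOrder X r ∧ ∀ i ∈ u, UnionOfAtMostConvex r (K i) (S i)) :
    ∃ r : X → X → Prop, IsStrictTotalOrder X r ∧ ∀ i, UnionOfAtMostConvex r (K i) (S i) := by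
  classical
  obtain ⟨f, hf, hfS⟩ := isClosed_setOf_isStrictTotalOrder.isCompact.inter_iInter_nonempty
    (fun i => {f : X × X → Bool | ¬ HasAlternatingChain (fun a b => f (a, b)) (S i) (K i)})
    (fun i => isClosed_setOf_not_hasAlternatingChain _ _) fun u => by
      obtain ⟨r, hr, hrS⟩ := h u
      have hrel : (fun a b => decide (r a b) = true) = r := by funext a b; simp
      refine ⟨fun p => decide (r p.1 p.2), ?_, Set.mem_iInter₂.2 fun i hi => ?_⟩
      · simpa only [Set.mem_ofPred_eq, hrel] using hr
      · simpa only [Set.mem_ofPred_eq, hrel] using hr.unionOfAtMostConvex_iff.1 (hrS i hi)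
  exact ⟨_, hf, fun i => hf.unionOfAtMostConvex_iff.2 (Set.mem_iInter.1 hfS i)⟩

end Compactness

theorem stmt_4 {L : Language} {M : Type*} [L.Structure M]
    (K : ((m : ℕ) × L.Formula (Unit ⊕ Fin m)) → ℕ)
    (h : ∀ (n : ℕ) (φ : Fin n → (m : ℕ) × L.Formula (Unit ⊕ Fin m))
        (b : (i : Fin n) → Fin (φ i).1 → M),
        ∃ r : M → M → Prop, IsStrictTotalOrder M r ∧
          ∀ i : Fin n, UnionOfAtMostConvex r (K (φ i)) (realizeSet L M (φ i).2 (b i))) :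
    ConvexlyOrderable L M := by
  obtain ⟨r, hr, hrS⟩ := exists_isStrictTotalOrder_forall_unionOfAtMostConvex
    (fun j : (m : ℕ) × L.Formula (Unit ⊕ Fin m) × (Fin m → M) => realizeSet L M j.2.1 j.2.2)
    (fun j => K ⟨j.1, j.2.1⟩) fun u => by
      let e := u.equivFin
      obtain ⟨r, hr, hrS⟩ := h u.card (fun i => ⟨(e.symm i).1.1, (e.symm i).1.2.1⟩)
        fun i => (e.symm i).1.2.2
      have hu : ∀ k : u,
          UnionOfAtMostConvex r (K ⟨k.1.1, k.1.2.1⟩) (realizeSet L M k.1.2.1 k.1.2.2) :=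
        fun k => e.symm_apply_apply k ▸ hrS (e k)
      exact ⟨r, hr, fun j hj => hu ⟨j, hj⟩⟩
  exact ⟨r, hr, fun m φ => ⟨K ⟨m, φ⟩, fun b => hrS ⟨m, φ, b⟩⟩⟩
end

section
/- Let M and N be elementarily equivalent L-structures (M ≡ N). If M is convexly orderable, then N is convexly orderable. -/
open FirstOrder Language

/-!
For a transitive order, `S` is a union of at most `K` convex sets iff there is no increasing
chain `a₀ < b₁ < a₁ < ⋯ < b_K < a_K` with all `aᵢ ∈ S` and all `bᵢ ∉ S`. This is a condition on
finitely many points, so it can be checked window by window: for finitely many formulas with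
parameters and finitely many points of `N`, elementary equivalence realizes the same configuration
in `M`, and the order of `M` pulls back to an order of `N` without bad chains in those windows.
An ultrafilter limit of these orders has no bad chain at all.
-/

open Filter Function

/-- `AltReach r A B k x`: there is an `r`-increasing chain `a₀, b₁, a₁, …, bₖ, aₖ = x` with all
`aᵢ ∈ A` and all `bᵢ ∈ B`. -/
inductive AltReach {X : Type*} (r : X → X → Prop) (A B : Set X) : ℕ → X → Prop
  | base {x : X} : x ∈ A → AltReach r A B 0 x
  | step {k : ℕ} {x y z : X} : AltReach r A B k x → r x y → y ∈ B → r y z → z ∈ A →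
      AltReach r A B (k + 1) z

namespace AltReach

variable {X : Type*} {r : X → X → Prop} {A B : Set X} {k : ℕ} {x : X}

theorem of_rel [IsTrans X r] {y : X} (h : AltReach r A B k x) (hxy : r x y) (hy : y ∈ A) :
    AltReach r A B k y := by
  cases h with
  | base _ => exact base hy
  | step hx hxu hu huz _ => exact step hx hxu hu (_root_.trans huz hxy) hy

theorem mono {A' B' : Set X} (hA : A ⊆ A') (hB : B ⊆ B') (h : AltReach r A B k x) :
    AltReach r A' B' k x := by
  induction h with
  | base hx => exact base (hA hx)
  | step _ hxy hy hyz hz ih => exact step ih hxy (hB hy) hyz (hA hz)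

theorem map {Y : Type*} {r' : Y → Y → Prop} {A' B' : Set Y} (g : X → Y)
    (hr : ∀ a b, r a b → r' (g a) (g b)) (hA : Set.MapsTo g A A') (hB : Set.MapsTo g B B')
    (h : AltReach r A B k x) : AltReach r' A' B' k (g x) := by
  induction h with
  | base hx => exact base (hA hx)
  | step _ hxy hy hyz hz ih => exact step ih (hr _ _ hxy) (hB hy) (hr _ _ hyz) (hA hz)

theorem exists_finset (h : AltReach r A B k x) :
    ∃ F : Finset X, AltReach r (A ∩ F) (B ∩ F) k x := by
  classical
  induction h with
  | @base x hx => exact ⟨{x}, base ⟨hx, Finset.mem_singleton_self x⟩⟩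
  | @step k x y z _ hxy hy hyz hz ih =>
    obtain ⟨F, hF⟩ := ih
    have hsub : (F : Set X) ⊆ ↑(insert y (insert z F)) := by
      simp only [Finset.coe_insert]
      exact (Set.subset_insert _ _).trans (Set.subset_insert _ _)
    exact ⟨insert y (insert z F),
      step (hF.mono (Set.inter_subset_inter_right _ hsub) (Set.inter_subset_inter_right _ hsub))
        hxy ⟨hy, by simp⟩ hyz ⟨hz, by simp⟩⟩

theorem eventually {ι : Type*} {l : Filter ι} {rs : ι → X → X → Prop}
    (h : AltReach (fun x y => ∀ᶠ i in l, rs i x y) A B k x) :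
    ∀ᶠ i in l, AltReach (rs i) A B k x := by
  induction h with
  | base hx => exact .of_forall fun _ => base hx
  | step _ hxy hy hyz hz ih =>
    filter_upwards [ih, hxy, hyz] with i hi hxy hyz
    exact step hi hxy hy hyz hz

end AltReach

section Convex

variable {X : Type*} {r : X → X → Prop} {K : ℕ} {S : Set X}

theorem UnionOfAtMostConvex.not_altReach [IsTrans X r] (hS : UnionOfAtMostConvex r K S) (x : X) :
    ¬ AltReach r S Sᶜ K x := by
  classical
  obtain ⟨C, hC, rfl⟩ := hS
  -- the pieces meeting the initial segment ending at `x`; each new gap forces a new piece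
  let below (x : X) : Finset (Fin K) := {i | ∃ y ∈ C i, y = x ∨ r y x}
  have lt_card : ∀ {k x}, AltReach r (⋃ i, C i) (⋃ i, C i)ᶜ k x → k < (below x).card := by
    intro k x h
    induction h with
    | @base x hx =>
      obtain ⟨i, hi⟩ := Set.mem_iUnion.1 hx
      refine Finset.card_pos.2 ⟨i, ?_⟩
      simp only [below, Finset.mem_filter, Finset.mem_univ, true_and]
      exact ⟨x, hi, .inl rfl⟩
    | @step k x y z _ hxy hy hyz hz ih =>
      obtain ⟨j, hj⟩ := Set.mem_iUnion.1 hz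
      have hxz : r x z := _root_.trans hxy hyz
      have hsub : below x ⊂ below z := by
        rw [Finset.ssubset_iff_of_subset]
        · refine ⟨j, ?_, ?_⟩
          · simp only [below, Finset.mem_filter, Finset.mem_univ, true_and]
            exact ⟨z, hj, .inl rfl⟩
          · simp only [below, Finset.mem_filter, Finset.mem_univ, true_and, not_exists, not_and]
            intro w hw hwx
            have hwy : r w y := hwx.elim (· ▸ hxy) (_root_.trans · hxy)
            exact hy (Set.mem_iUnion.2 ⟨j, hC j w y z hwy hyz hw hj⟩)
        · intro i
          simp only [below, Finset.mem_filter, Finset.mem_univ, true_and]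
          rintro ⟨w, hw, hwx⟩
          exact ⟨w, hw, .inr (hwx.elim (· ▸ hxz) (_root_.trans · hxz))⟩
      have := Finset.card_lt_card hsub
      omega
  intro h
  have := (lt_card h).trans_le ((Finset.card_le_univ _).trans_eq (Fintype.card_fin K))
  exact lt_irrefl _ this

theorem unionOfAtMostConvex_of_forall_not_altReach [IsTrans X r]
    (h : ∀ x, ¬ AltReach r S Sᶜ K x) : UnionOfAtMostConvex r K S := by
  classical
  -- the pieces are the level sets of the length of the longest alternating chain ending at `x`
  let rank (x : X) : ℕ := Nat.findGreatest (fun k => AltReach r S Sᶜ k x) K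
  have reach_rank (x) (hx : x ∈ S) : AltReach r S Sᶜ (rank x) x :=
    Nat.findGreatest_spec (P := fun k => AltReach r S Sᶜ k x) (Nat.zero_le K) (.base hx)
  have rank_lt (x) (hx : x ∈ S) : rank x < K :=
    (Nat.findGreatest_le K).lt_of_ne fun he => h x (he ▸ reach_rank x hx)
  have le_rank {k x} (hk : k ≤ K) (hx : AltReach r S Sᶜ k x) : k ≤ rank x :=
    Nat.le_findGreatest hk hx
  refine ⟨fun i => {x ∈ S | rank x = i}, fun i a b c hab hbc ⟨ha, hai⟩ ⟨hc, hci⟩ => ?_, ?_⟩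
  · by_cases hb : b ∈ S
    · have := le_rank (rank_lt a ha).le ((reach_rank a ha).of_rel hab hb)
      have := le_rank (rank_lt b hb).le ((reach_rank b hb).of_rel hbc hc)
      exact ⟨hb, by omega⟩
    · have := le_rank (rank_lt a ha) ((reach_rank a ha).step hab hb hbc hc)
      omega
  · ext x
    simp only [Set.mem_iUnion]
    exact ⟨fun hx => ⟨⟨rank x, rank_lt x hx⟩, hx, rfl⟩, fun ⟨_, hx, _⟩ => hx⟩

theorem UnionOfAtMostConvex.image_inl {Y : Type*} (s : Y → Y → Prop)
    (hS : UnionOfAtMostConvex r K S) :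
    UnionOfAtMostConvex (Sum.Lex r s) K (Sum.inl '' S) := by
  obtain ⟨C, hC, rfl⟩ := hS
  refine ⟨fun i => Sum.inl '' C i, fun i a b c hab hbc ha hc => ?_, Set.image_iUnion⟩
  obtain ⟨a, ha, rfl⟩ := ha
  obtain ⟨c, hc, rfl⟩ := hc
  cases b with
  | inl b => exact ⟨b, hC i a b c (Sum.lex_inl_inl.1 hab) (Sum.lex_inl_inl.1 hbc) ha hc, rfl⟩
  | inr b => exact absurd hbc Sum.lex_inr_inl

end Convex

theorem isStrictTotalOrder_eventually {ι X : Type*} (U : Ultrafilter ι) (rs : ι → X → X → Prop)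
    (h : ∀ i, IsStrictTotalOrder X (rs i)) :
    IsStrictTotalOrder X (fun x y => ∀ᶠ i in U, rs i x y) where
  trichotomous x y hxy hyx := by
    by_contra hne
    have : ∀ᶠ i in U, rs i x y ∨ rs i y x := .of_forall fun i =>
      or_iff_not_imp_left.2 fun h₁ => by_contra fun h₂ => hne ((h i).trichotomous x y h₁ h₂)
    exact (U.eventually_or.1 this).elim hxy hyx
  irrefl x hx := by
    obtain ⟨i, hi⟩ := hx.exists
    exact (h i).irrefl x hi
  trans x y z hxy hyz := by
    filter_upwards [hxy, hyz] with i hxy hyz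
    exact (h i).trans x y z hxy hyz

theorem exists_isStrictTotalOrder_forall_not_altReach {ι X : Type*} (A B : ι → Set X) (k : ι → ℕ)
    (h : ∀ s : Finset ι, ∃ r : X → X → Prop, IsStrictTotalOrder X r ∧
      ∀ i ∈ s, ∀ x, ¬ AltReach r (A i) (B i) (k i) x) :
    ∃ r : X → X → Prop, IsStrictTotalOrder X r ∧ ∀ i x, ¬ AltReach r (A i) (B i) (k i) x := by
  choose rs hrs hs using h
  let U : Ultrafilter (Finset ι) := .of atTop
  refine ⟨fun x y => ∀ᶠ s in U, rs s x y, isStrictTotalOrder_eventually U rs hrs, fun i x hx => ?_⟩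
  have hi : ∀ᶠ s in (U : Filter (Finset ι)), i ∈ s := Ultrafilter.of_le atTop
    ((eventually_ge_atTop {i}).mono fun s hs => Finset.singleton_subset_iff.1 hs)
  obtain ⟨s, his, hsx⟩ := (hi.and hx.eventually).exists
  exact hs s i his x hsx

theorem FirstOrder.Language.Formula.realize_relabel_sumElim {L : Language} {P : Type*}
    [L.Structure P] {m : ℕ} (φ : L.Formula (Unit ⊕ Fin m)) {α : Type*} (a : α) (β : Fin m → α)
    (v : α → P) :
    (φ.relabel (Sum.elim (fun _ => a) β)).Realize v ↔ v a ∈ realizeSet L P φ (v ∘ β) := by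
  rw [Formula.realize_relabel, Sum.comp_elim]
  rfl

namespace FirstOrder.Language.ElementarilyEquivalent

variable {L : Language} {M N : Type*} [L.Structure M] [L.Structure N]

theorem exists_realize_iff (h : M ≅[L] N) {α ι : Type*} [Finite α] [Finite ι]
    (ψ : ι → L.Formula α) (v : α → N) :
    ∃ v' : α → M, ∀ i, (ψ i).Realize v' ↔ (ψ i).Realize v := by
  classical
  let χ : L.Formula α := Formula.iInf fun i => if (ψ i).Realize v then ψ i else (ψ i).not
  have hN : N ⊨ (χ.relabel (Sum.inr : α → Empty ⊕ α)).iExs α := by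
    simp only [Sentence.Realize, Formula.realize_iExs, Formula.realize_relabel, Sum.elim_comp_inr,
      χ, Formula.realize_iInf]
    exact ⟨v, fun i => by split_ifs with hi <;> simpa using hi⟩
  have hM := (h.realize_sentence _).2 hN
  simp only [Sentence.Realize, Formula.realize_iExs, Formula.realize_relabel, Sum.elim_comp_inr,
      χ, Formula.realize_iInf] at hM
  obtain ⟨v', hv'⟩ := hM
  refine ⟨v', fun i => ?_⟩
  have hi' := hv' i
  split_ifs at hi' with hi
  · exact iff_of_true hi' hi
  · exact iff_of_false (by simpa using hi') hi

theorem exists_injective_realizeSet_iff (h : M ≅[L] N) (G : Finset N) {ι : Type*} [Finite ι]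
    {m : ι → ℕ} (φ : ∀ i, L.Formula (Unit ⊕ Fin (m i))) (b : ∀ i, Fin (m i) → N) :
    ∃ (f : G → M) (b' : ∀ i, Fin (m i) → M), Function.Injective f ∧
      ∀ i (x : G), f x ∈ realizeSet L M (φ i) (b' i) ↔ (x : N) ∈ realizeSet L N (φ i) (b i) := by
  let ψ : (ι × G) ⊕ (G × G) → L.Formula (G ⊕ Σ i, Fin (m i))
    | .inl (i, x) => (φ i).relabel (Sum.elim (fun _ => .inl x) fun j => .inr ⟨i, j⟩)
    | .inr (x, y) => (Term.var (.inl x)).equal (Term.var (.inl y))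
  obtain ⟨v, hv⟩ := h.exists_realize_iff ψ (Sum.elim (↑) fun p => b p.1 p.2)
  refine ⟨v ∘ .inl, fun i j => v (.inr ⟨i, j⟩), fun x y hxy => Subtype.ext ?_, fun i x => ?_⟩
  · simpa [ψ] using (hv (.inr (x, y))).1 hxy
  · have hi := hv (.inl (i, x))
    dsimp only [ψ] at hi
    rwa [Formula.realize_relabel_sumElim, Formula.realize_relabel_sumElim] at hi

end FirstOrder.Language.ElementarilyEquivalent

/-- The definable set `φ(N; b)` looked at only inside the finite window `F`. -/
structure Window (L : Language) (N : Type*) where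
  m : ℕ
  φ : L.Formula (Unit ⊕ Fin m)
  b : Fin m → N
  F : Finset N

theorem exists_isStrictTotalOrder_not_altReach_of_finset {L : Language} {M N : Type*}
    [L.Structure M] [L.Structure N] (h : M ≅[L] N) {rM : M → M → Prop} [IsStrictTotalOrder M rM]
    (K : ∀ m, L.Formula (Unit ⊕ Fin m) → ℕ)
    (hK : ∀ m φ (b : Fin m → M), UnionOfAtMostConvex rM (K m φ) (realizeSet L M φ b))
    (s : Finset (Window L N)) :
    ∃ r : N → N → Prop, IsStrictTotalOrder N r ∧ ∀ w ∈ s, ∀ x,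
      ¬ AltReach r (realizeSet L N w.φ w.b ∩ w.F) (↑w.F \ realizeSet L N w.φ w.b)
        (K w.m w.φ) x := by
  classical
  set G := s.biUnion Window.F
  obtain ⟨f, b', hf, hfb⟩ :=
    h.exists_injective_realizeSet_iff G (fun w : s => w.1.φ) (fun w => w.1.b)
  -- `N` is ordered as a subset of the lexicographic sum `M + N`, the window points lying in `M`
  let g (x : N) : M ⊕ N := if hx : x ∈ G then .inl (f ⟨x, hx⟩) else .inr x
  have hg : g.Injective := by
    intro x y hxy
    simp only [g] at hxy
    split_ifs at hxy <;> simp_all [hf.eq_iff]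
  have : IsStrictTotalOrder (M ⊕ N) (Sum.Lex rM WellOrderingRel) := {}
  refine ⟨Sum.Lex rM WellOrderingRel on g, hg.isStrictTotalOrder_onFun (r := Sum.Lex _ _),
    fun w hw x hx => ?_⟩
  have hgw (y : N) (hy : y ∈ w.F) : g y = .inl (f ⟨y, Finset.mem_biUnion.2 ⟨w, hw, hy⟩⟩) :=
    dif_pos _
  refine ((hK w.m w.φ (b' ⟨w, hw⟩)).image_inl WellOrderingRel).not_altReach _
    (hx.map g (fun _ _ => id) ?_ ?_)
  · rintro y ⟨hyS, hyF⟩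
    rw [hgw y hyF]
    exact ⟨_, (hfb ⟨w, hw⟩ _).2 hyS, rfl⟩
  · rintro y ⟨hyF, hyS⟩ ⟨z, hz, hzy⟩
    rw [hgw y hyF, Sum.inl.injEq] at hzy
    exact hyS ((hfb ⟨w, hw⟩ _).1 (hzy ▸ hz))

theorem stmt_5 {L : Language} {M N : Type*} [L.Structure M] [L.Structure N]
    (h : M ≅[L] N) (hM : ConvexlyOrderable L M) : ConvexlyOrderable L N := by
  obtain ⟨rM, hrM, hM⟩ := hM
  choose K hK using hM
  obtain ⟨r, hr, hrw⟩ := exists_isStrictTotalOrder_forall_not_altReach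
    (fun w : Window L N => realizeSet L N w.φ w.b ∩ w.F)
    (fun w => ↑w.F \ realizeSet L N w.φ w.b) (fun w => K w.m w.φ)
    (exists_isStrictTotalOrder_not_altReach_of_finset h K hK)
  refine ⟨r, hr, fun m φ => ⟨K m φ, fun b => unionOfAtMostConvex_of_forall_not_altReach
    fun x hx => ?_⟩⟩
  obtain ⟨F, hF⟩ := hx.exists_finset
  exact hrw ⟨m, φ, b, F⟩ x (by simpa only [Set.sdiff_eq_compl_inter] using hF)
end

section
/- Let M be an L-structure, let φ(x; ȳ) be a partitioned L-formula with x a single variable, let < be a linear order on M, and let K < ω be such that for every b̄ ∈ M^{lg(ȳ)}, the set φ(M; b̄) is a union of at most K <-convex subsets of M. Then for every finite set B ⊆ M^{lg(ȳ)}, the number of distinct functions from B to {true, false} of the form b̄ ↦ (M ⊨ φ(a; b̄)) for a ∈ M is at most 2K·|B| + 1. In particular, φ(x; ȳ) has VC-density ≤ 1 in Th(M). -/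
open FirstOrder Language


lemma sort3 {P : ℕ → Prop} {a b c : ℕ} (ha : P a) (hb : P b) (hc : P c)
    (h1 : a ≠ b) (h2 : a ≠ c) (h3 : b ≠ c) :
    ∃ x y z, x < y ∧ y < z ∧ P x ∧ P y ∧ P z := by
  rcases Nat.lt_trichotomy a b with hab | hab | hab
  · rcases Nat.lt_trichotomy b c with hbc | hbc | hbc
    · exact ⟨a, b, c, hab, hbc, ha, hb, hc⟩
    · exact absurd hbc h3
    · rcases Nat.lt_trichotomy a c with hac | hac | hac
      · exact ⟨a, c, b, hac, hbc, ha, hc, hb⟩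
      · exact absurd hac h2
      · exact ⟨c, a, b, hac, hab, hc, ha, hb⟩
  · exact absurd hab h1
  · rcases Nat.lt_trichotomy a c with hac | hac | hac
    · exact ⟨b, a, c, hab, hac, hb, ha, hc⟩
    · exact absurd hac h2
    · rcases Nat.lt_trichotomy b c with hbc | hbc | hbc
      · exact ⟨b, c, a, hbc, hac, hb, hc, ha⟩
      · exact absurd hbc h3
      · exact ⟨c, b, a, hbc, hab, hc, hb, ha⟩

lemma changes_le_two (t : ℕ) (v : ℕ → Prop)
    [DecidablePred fun j => ¬(v j ↔ v (j+1))]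
    (hconv : ∀ p q u, p ≤ u → u ≤ q → q < t → v p → v q → v u) :
    ((Finset.range (t-1)).filter (fun j => ¬(v j ↔ v (j+1)))).card ≤ 2 := by
  by_contra hcard
  obtain ⟨a, b, c, ha, hb, hc, h1, h2, h3⟩ := Finset.two_lt_card_iff.1 (Nat.lt_of_not_le hcard)
  obtain ⟨x, y, z, hxy, hyz, hx, hy, hz⟩ := sort3 ha hb hc h1 h2 h3
  have hmem : ∀ j, j ∈ (Finset.range (t-1)).filter (fun j => ¬(v j ↔ v (j+1))) →
      j < t - 1 ∧ ¬(v j ↔ v (j+1)) := by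
    intro j hj
    simpa [Finset.mem_filter, Finset.mem_range] using hj
  obtain ⟨hxr, hxv⟩ := hmem x hx
  obtain ⟨hyr, hyv⟩ := hmem y hy
  obtain ⟨hzr, hzv⟩ := hmem z hz
  have lemA : ∀ p q, p < q → p < t - 1 → q < t - 1 → ¬(v p ↔ v (p+1)) →
      ¬(v q ↔ v (q+1)) → ¬ v p := by
    intro p q hpq hpr hqr hpv hqv hvp
    have hnp1 : ¬ v (p+1) := fun h => hpv ⟨fun _ => h, fun _ => hvp⟩
    by_cases hq : v q
    · exact hnp1 (hconv p q (p+1) (by omega) (by omega) (by omega) hvp hq)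
    · have hq1 : v (q+1) := by tauto
      exact hnp1 (hconv p (q+1) (p+1) (by omega) (by omega) (by omega) hvp hq1)
  have hnx : ¬ v x := lemA x y hxy hxr hyr hxv hyv
  have hny : ¬ v y := lemA y z hyz hyr hzr hyv hzv
  have hx1 : v (x+1) := by tauto
  have hy1 : v (y+1) := by tauto
  exact hny (hconv (x+1) (y+1) y (by omega) (by omega) (by omega) hx1 hy1)

theorem stmt_7 {L : Language} {M : Type*} [L.Structure M] {m : ℕ}
    (φ : L.Formula (Unit ⊕ Fin m)) (r : M → M → Prop) (hr : IsStrictTotalOrder M r)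
    (K : ℕ) (hK : ∀ b : Fin m → M, UnionOfAtMostConvex r K (realizeSet L M φ b)) :
    ∀ B : Finset (Fin m → M),
      Set.ncard {f : {b // b ∈ B} → Prop |
          ∃ a : M, ∀ b : {b // b ∈ B}, f b ↔ a ∈ realizeSet L M φ b.1}
        ≤ 2 * K * B.card + 1 := by
  intro B
  classical
  letI : LinearOrder M := linearOrderOfSTO r
  have hltr : ∀ x y : M, x < y → r x y := fun x y h => h
  set trace : M → ({b // b ∈ B} → Prop) := fun a b => a ∈ realizeSet L M φ b.1 with htr
  have hTeq : {f : {b // b ∈ B} → Prop |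
      ∃ a : M, ∀ b : {b // b ∈ B}, f b ↔ a ∈ realizeSet L M φ b.1} = Set.range trace := by
    ext f
    simp only [Set.mem_setOf_eq, Set.mem_range]
    constructor
    · rintro ⟨a, ha⟩
      exact ⟨a, funext fun b => propext (ha b).symm⟩
    · rintro ⟨a, rfl⟩
      exact ⟨a, fun b => Iff.rfl⟩
  rw [hTeq]
  by_contra hcon
  push_neg at hcon
  have hfin : (Set.range trace).Finite := by
    by_contra hinf
    rw [Set.Infinite.ncard hinf] at hcon
    omega
  have hFcard : 2 * K * B.card + 2 ≤ hfin.toFinset.card := by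
    rw [Set.ncard_eq_toFinset_card _ hfin] at hcon
    omega
  set F := hfin.toFinset with hF
  have hwit : ∀ f ∈ F, ∃ a : M, trace a = f := by
    intro f hf
    rw [hF, Set.Finite.mem_toFinset] at hf
    exact hf
  have hMne : Nonempty M := by
    have hFne : F.Nonempty := Finset.card_pos.1 (by omega)
    obtain ⟨f, hf⟩ := hFne
    obtain ⟨a, -⟩ := hwit f hf
    exact ⟨a⟩
  choose! w hw using hwit
  have hwinj : Set.InjOn w F := by
    intro f hf g hg hfg
    calc f = trace (w f) := (hw f hf).symm
    _ = trace (w g) := by rw [hfg]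
    _ = g := hw g hg
  set A := F.image w with hA
  have hAcard : A.card = F.card := Finset.card_image_of_injOn hwinj
  set t := A.card with ht
  have htge : 2 * K * B.card + 2 ≤ t := by omega
  have htpos : 0 < t := by omega
  set e := A.orderIsoOfFin rfl with he
  set av : ℕ → M := fun j => (e ⟨j % t, Nat.mod_lt _ htpos⟩ : M) with hav
  have hav' : ∀ j, (hj : j < t) → av j = (e ⟨j, hj⟩ : M) := by
    intro j hj
    simp only [hav]
    congr 2
    exact Fin.ext (Nat.mod_eq_of_lt hj)
  have hmono : ∀ i j, i < j → j < t → r (av i) (av j) := by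
    intro i j hij hj
    rw [hav' i (lt_trans hij hj), hav' j hj]
    apply hltr
    exact Subtype.coe_lt_coe.2 (e.lt_iff_lt.2 (by exact hij))
  have havA : ∀ j, (hj : j < t) → av j ∈ A := by
    intro j hj
    rw [hav' j hj]
    exact (e ⟨j, hj⟩).2
  have hwt : ∀ x ∈ A, w (trace x) = x := by
    intro x hx
    rw [hA, Finset.mem_image] at hx
    obtain ⟨f, hf, rfl⟩ := hx
    rw [hw f hf]
  have hdist : ∀ i j, i < t → j < t → i ≠ j → trace (av i) ≠ trace (av j) := by
    intro i j hi hj hne heq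
    have haveq : av i = av j := by
      rw [← hwt _ (havA i hi), ← hwt _ (havA j hj), heq]
    apply hne
    rw [hav' i hi, hav' j hj] at haveq
    have := e.injective (Subtype.coe_injective haveq)
    exact Fin.mk.injEq .. ▸ (by injection this)
  -- gap counting
  set ch : (Fin m → M) → Finset ℕ := fun b =>
    (Finset.range (t-1)).filter
      (fun j => ¬(av j ∈ realizeSet L M φ b ↔ av (j+1) ∈ realizeSet L M φ b)) with hch
  have hsub : Finset.range (t-1) ⊆ B.biUnion ch := by
    intro j hj
    rw [Finset.mem_range] at hj
    have hne := hdist j (j+1) (by omega) (by omega) (by omega)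
    have hex : ∃ b : {b // b ∈ B},
        ¬(av j ∈ realizeSet L M φ b.1 ↔ av (j+1) ∈ realizeSet L M φ b.1) := by
      by_contra hall
      push_neg at hall
      apply hne
      funext b
      exact propext (hall b)
    obtain ⟨b, hb⟩ := hex
    rw [Finset.mem_biUnion]
    exact ⟨b.1, b.2, Finset.mem_filter.2 ⟨Finset.mem_range.2 hj, hb⟩⟩
  have hchle : ∀ b ∈ B, (ch b).card ≤ 2 * K := by
    intro b _
    obtain ⟨C, hCconv, hCS⟩ := hK b
    set ch' : Fin K → Finset ℕ := fun i =>
      (Finset.range (t-1)).filter (fun j => ¬(av j ∈ C i ↔ av (j+1) ∈ C i)) with hch'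
    have hsub2 : ch b ⊆ Finset.univ.biUnion ch' := by
      intro j hj
      rw [hch, Finset.mem_filter, Finset.mem_range] at hj
      obtain ⟨hjr, hjv⟩ := hj
      rw [Finset.mem_biUnion]
      by_contra hall
      push_neg at hall
      apply hjv
      rw [hCS]
      simp only [Set.mem_iUnion]
      have hiff : ∀ i : Fin K, av j ∈ C i ↔ av (j+1) ∈ C i := by
        intro i
        have := hall i (Finset.mem_univ i)
        rw [hch', Finset.mem_filter, Finset.mem_range] at this
        tauto
      constructor
      · rintro ⟨i, hi⟩; exact ⟨i, (hiff i).1 hi⟩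
      · rintro ⟨i, hi⟩; exact ⟨i, (hiff i).2 hi⟩
    have hch'le : ∀ i : Fin K, (ch' i).card ≤ 2 := by
      intro i
      apply changes_le_two t (fun j => av j ∈ C i)
      intro p q u hpu huq hq hp hq'
      rcases eq_or_lt_of_le hpu with h | h
      · exact h ▸ hp
      rcases eq_or_lt_of_le huq with h' | h'
      · exact h' ▸ hq'
      exact hCconv i (av p) (av u) (av q) (hmono p u h (by omega)) (hmono u q h' hq) hp hq'
    calc (ch b).card ≤ (Finset.univ.biUnion ch').card := Finset.card_le_card hsub2
    _ ≤ ∑ i, (ch' i).card := Finset.card_biUnion_le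
    _ ≤ Finset.univ.card • 2 := Finset.sum_le_card_nsmul _ _ _ (fun i _ => hch'le i)
    _ = 2 * K := by simp [smul_eq_mul, mul_comm]
  have hfinal : t - 1 ≤ B.card * (2 * K) := by
    calc t - 1 = (Finset.range (t-1)).card := (Finset.card_range _).symm
    _ ≤ (B.biUnion ch).card := Finset.card_le_card hsub
    _ ≤ ∑ b ∈ B, (ch b).card := Finset.card_biUnion_le
    _ ≤ B.card • (2 * K) := Finset.sum_le_card_nsmul _ _ _ hchle
    _ = B.card * (2 * K) := smul_eq_mul ..
  have hcomm : 2 * K * B.card = B.card * (2 * K) := by ring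
  omega
end

section
/- Let M be a set, let I be an uncountable index set, and let (A_i)_{i ∈ I} be a family of subsets of M that is independent, i.e., for all finite disjoint I_0, I_1 ⊆ I, the set (⋂_{i ∈ I_0} A_i) ∩ (⋂_{j ∈ I_1} (M \ A_j)) is nonempty. Then there do not exist a linear order < on M and a function N : I → ℕ such that for every i ∈ I, the set A_i is a union of at most N(i) <-convex subsets of M. -/
theorem exists_infinite_fiber_of_countable {α β : Type*} [Uncountable α] [Countable β]
    (f : α → β) : ∃ b, (f ⁻¹' {b}).Infinite := by
  by_contra! h
  have : (Set.univ : Set α).Countable := by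
    rw [← Set.preimage_univ (f := f), ← Set.iUnion_of_singleton, Set.preimage_iUnion]
    exact Set.countable_iUnion fun b => (h b).countable
  exact not_countable (Set.countable_univ_iff.mp this)

theorem IsRConvex.ordConnected {X : Type*} [LinearOrder X] {S : Set X}
    (hS : IsRConvex (· < ·) S) : S.OrdConnected := by
  refine ⟨fun a ha c hc b ⟨hab, hbc⟩ => ?_⟩
  rcases hab.eq_or_lt with rfl | hab
  · exact ha
  rcases hbc.eq_or_lt with rfl | hbc
  · exact hc
  exact hS a b c hab hbc ha hc

section MembershipChanges

variable {M : Type*} {L : ℕ}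

open Classical in
noncomputable def membershipChanges (p : Fin (L + 1) → M) (S : Set M) : Finset (Fin L) :=
  {j | ¬(p j.castSucc ∈ S ↔ p j.succ ∈ S)}

theorem mem_membershipChanges {p : Fin (L + 1) → M} {S : Set M} {j : Fin L} :
    j ∈ membershipChanges p S ↔ ¬(p j.castSucc ∈ S ↔ p j.succ ∈ S) := by
  simp [membershipChanges]

theorem membershipChanges_iUnion_subset {K : ℕ} (p : Fin (L + 1) → M) (C : Fin K → Set M) :
    membershipChanges p (⋃ m, C m) ⊆ Finset.univ.biUnion fun m => membershipChanges p (C m) := by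
  intro j hj
  simp only [Finset.mem_biUnion, Finset.mem_univ, true_and, mem_membershipChanges] at hj ⊢
  by_contra! h
  exact hj (by simp only [Set.mem_iUnion, h])

theorem card_membershipChanges_le_two [LinearOrder M] {p : Fin (L + 1) → M} (hp : Monotone p)
    {S : Set M} (hS : S.OrdConnected) : (membershipChanges p S).card ≤ 2 := by
  classical
  have hT : (p ⁻¹' S).OrdConnected := hS.preimage_mono hp
  let entries : Finset (Fin L) := {j | p j.castSucc ∉ S ∧ p j.succ ∈ S}
  let exits : Finset (Fin L) := {j | p j.castSucc ∈ S ∧ p j.succ ∉ S}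
  -- Between two entries (or two exits) lies a point outside `S` flanked by points of `S`.
  have entries_le : ∀ j ∈ entries, ∀ j' ∈ entries, j ≤ j' := by
    simp only [entries, Finset.mem_filter, Finset.mem_univ, true_and]
    intro j hj j' hj'
    by_contra! hlt
    exact hj.1 (hT.out hj'.2 hj.2 ⟨Fin.succ_le_castSucc_iff.2 hlt, Fin.castSucc_lt_succ.le⟩)
  have exits_le : ∀ j ∈ exits, ∀ j' ∈ exits, j ≤ j' := by
    simp only [exits, Finset.mem_filter, Finset.mem_univ, true_and]
    intro j hj j' hj'
    by_contra! hlt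
    exact hj'.2 (hT.out hj'.1 hj.1 ⟨Fin.castSucc_lt_succ.le, Fin.succ_le_castSucc_iff.2 hlt⟩)
  have h_subset : membershipChanges p S ⊆ entries ∪ exits := by
    intro j hj
    simp only [mem_membershipChanges] at hj
    simp only [entries, exits, Finset.mem_union, Finset.mem_filter, Finset.mem_univ, true_and]
    tauto
  calc (membershipChanges p S).card ≤ (entries ∪ exits).card := Finset.card_le_card h_subset
    _ ≤ entries.card + exits.card := Finset.card_union_le _ _
    _ ≤ 1 + 1 := by
      gcongr <;> rw [Finset.card_le_one]
      · exact fun j hj j' hj' => (entries_le j hj j' hj').antisymm (entries_le j' hj' j hj)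
      · exact fun j hj j' hj' => (exits_le j hj j' hj').antisymm (exits_le j' hj' j hj)

theorem card_membershipChanges_le [LinearOrder M] {p : Fin (L + 1) → M} (hp : Monotone p)
    {K : ℕ} {S : Set M} (hS : UnionOfAtMostConvex (· < ·) K S) :
    (membershipChanges p S).card ≤ 2 * K := by
  obtain ⟨C, hC, rfl⟩ := hS
  calc (membershipChanges p (⋃ m, C m)).card
      ≤ (Finset.univ.biUnion fun m => membershipChanges p (C m)).card :=
        Finset.card_le_card (membershipChanges_iUnion_subset p C)
    _ ≤ Finset.univ.card * 2 :=
        Finset.card_biUnion_le_card_mul _ _ _ fun m _ =>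
          card_membershipChanges_le_two hp (hC m).ordConnected
    _ = 2 * K := by rw [Finset.card_univ, Fintype.card_fin, mul_comm]

end MembershipChanges

theorem card_le_of_separates {M I : Type*} [LinearOrder M] {A : I → Set M} {K : ℕ}
    {s : Finset I} (hA : ∀ i ∈ s, UnionOfAtMostConvex (· < ·) K (A i)) {P : Finset M}
    (hsep : ∀ x ∈ P, ∀ y ∈ P, x ≠ y → ∃ i ∈ s, ¬(x ∈ A i ↔ y ∈ A i)) :
    P.card ≤ 2 * K * s.card + 1 := by
  classical
  rcases hP : P.card with _ | L
  · exact Nat.zero_le _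
  let p := P.orderEmbOfFin hP
  have h_cover : (Finset.univ : Finset (Fin L)) ⊆ s.biUnion fun i => membershipChanges p (A i) := by
    intro j _
    obtain ⟨i, hi, hsep⟩ := hsep _ (P.orderEmbOfFin_mem hP _) _ (P.orderEmbOfFin_mem hP _)
      (p.injective.ne Fin.castSucc_lt_succ.ne)
    exact Finset.mem_biUnion.2 ⟨i, hi, mem_membershipChanges.2 hsep⟩
  have : L ≤ s.card * (2 * K) := by
    simpa using (Finset.card_le_card h_cover).trans <|
      Finset.card_biUnion_le_card_mul _ _ _ fun i hi => card_membershipChanges_le p.monotone (hA i hi)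
  linarith

theorem exists_finset_card_two_pow_separated {M I : Type*} {A : I → Set M}
    (hind : ∀ s t : Finset I, Disjoint s t →
      ((⋂ i ∈ s, A i) ∩ ⋂ j ∈ t, (A j)ᶜ).Nonempty) (s : Finset I) :
    ∃ P : Finset M, P.card = 2 ^ s.card ∧
      ∀ x ∈ P, ∀ y ∈ P, x ≠ y → ∃ i ∈ s, ¬(x ∈ A i ↔ y ∈ A i) := by
  classical
  have h_pattern : ∀ T : Finset I, ∃ x : M, ∀ i ∈ s, x ∈ A i ↔ i ∈ T := by
    intro T
    obtain ⟨x, hxT, hxs⟩ := hind T (s \ T) Finset.disjoint_sdiff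
    simp only [Set.mem_iInter, Set.mem_compl_iff, Finset.mem_sdiff] at hxT hxs
    exact ⟨x, fun i hi => ⟨fun hx => by_contra fun hiT => hxs i ⟨hi, hiT⟩ hx, hxT i⟩⟩
  choose x hx using h_pattern
  have h_sep : ∀ T ∈ s.powerset, ∀ T' ∈ s.powerset, T ≠ T' →
      ∃ i ∈ s, ¬(x T ∈ A i ↔ x T' ∈ A i) := by
    intro T hT T' hT' hne
    obtain ⟨i, hi⟩ := not_forall.1 (mt Finset.ext_iff.2 hne)
    have his : i ∈ s := by
      by_cases h : i ∈ T
      exacts [Finset.mem_powerset.1 hT h, Finset.mem_powerset.1 hT' (by tauto)]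
    exact ⟨i, his, by rwa [hx T i his, hx T' i his]⟩
  have h_inj : Set.InjOn x s.powerset := fun T hT T' hT' hxx => by
    by_contra hne
    obtain ⟨i, -, hi⟩ := h_sep T hT T' hT' hne
    exact hi (by rw [hxx])
  refine ⟨s.powerset.image x, by rw [Finset.card_image_of_injOn h_inj, Finset.card_powerset], ?_⟩
  simp only [Finset.mem_image]
  rintro _ ⟨T, hT, rfl⟩ _ ⟨T', hT', rfl⟩ hne
  exact h_sep T hT T' hT' (ne_of_apply_ne x hne)

theorem stmt_8 {M : Type*} {I : Type*} [Uncountable I] (A : I → Set M)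
    (hind : ∀ s t : Finset I, Disjoint s t →
      ((⋂ i ∈ s, A i) ∩ ⋂ j ∈ t, (A j)ᶜ).Nonempty) :
    ¬ ∃ (r : M → M → Prop) (N : I → ℕ), IsStrictTotalOrder M r ∧
        ∀ i, UnionOfAtMostConvex r (N i) (A i) := by
  classical
  rintro ⟨r, N, hr, hA⟩
  let : LinearOrder M := linearOrderOfSTO r
  obtain ⟨K, hK⟩ := exists_infinite_fiber_of_countable N
  obtain ⟨s, hsK, hs⟩ := hK.exists_subset_card_eq (2 * K + 3)
  obtain ⟨P, hP, hsep⟩ := exists_finset_card_two_pow_separated hind s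
  have hA' : ∀ i ∈ s, UnionOfAtMostConvex (· < ·) K (A i) := fun i hi =>
    (hsK hi : N i = K) ▸ hA i
  have h_bound := card_le_of_separates hA' hsep
  rw [hP, hs] at h_bound
  have h_pow : 2 ^ (2 * K + 3) = 8 * 2 ^ K * 2 ^ K := by ring
  have := Nat.lt_two_pow_self (n := K)
  nlinarith
end

section
/- Let T be a complete satisfiable L-theory, let Ψ = {ψ_i(x; z̄_i) : i ∈ I} be a set of partitioned L-formulas (each with x a single variable), and let φ(x; ȳ) be a partitioned L-formula. Suppose that for every model M ⊨ T and every b̄ ∈ M^{lg(ȳ)}, there exist i ∈ I and c̄ ∈ M^{lg(z̄_i)} such that φ(M; b̄) = ψ_i(M; c̄). Then there exists a finite subset I_0 ⊆ I such that for every model M ⊨ T and every b̄ ∈ M^{lg(ȳ)}, there exist i ∈ I_0 and c̄ ∈ M^{lg(z̄_i)} such that φ(M; b̄) = ψ_i(M; c̄). -/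
open FirstOrder Language

universe w

/-! If no finite `I₀` works, then for every finite `s ⊆ I` some model of `T` has a tuple `b̄`
with `φ(M; b̄)` different from every `ψ_i(M; c̄)`, `i ∈ s`. Completeness of `T` moves all these
witnesses into a single model `M`, so the type `{¬∃ z̄ ∀ x (φ(x; ȳ) ↔ ψ_i(x; z̄)) : i ∈ I}` is
finitely realized in `M`, hence realized in an ultrapower of `M` by the diagonal tuple. That
ultrapower is again a model of `T`, contradicting the hypothesis at this tuple. -/

namespace FirstOrder.Language

variable {L : Language} {M : Type*} [L.Structure M]

noncomputable def sameSetFormula {m k : ℕ} (φ : L.Formula (Unit ⊕ Fin m))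
    (ψ : L.Formula (Unit ⊕ Fin k)) : L.Formula (Fin m) :=
  Formula.iExs (Fin k) <| Formula.iAlls Unit <|
    ((φ.relabel (Sum.map id Sum.inl)).iff (ψ.relabel (Sum.map id Sum.inr))).relabel
      (Sum.elim Sum.inr Sum.inl)

theorem realize_sameSetFormula {m k : ℕ} (φ : L.Formula (Unit ⊕ Fin m))
    (ψ : L.Formula (Unit ⊕ Fin k)) (b : Fin m → M) :
    (sameSetFormula φ ψ).Realize b ↔ ∃ c : Fin k → M, realizeSet L M φ b = realizeSet L M ψ c := by
  simp only [sameSetFormula, Formula.realize_iExs, Formula.realize_iAlls, Formula.realize_iff,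
    Formula.realize_relabel, realizeSet, Set.ext_iff, Set.mem_ofPred_eq]
  refine exists_congr fun c => ⟨fun H a => ?_, fun H x => ?_⟩
  · convert H fun _ => a using 2 <;> funext u <;> rcases u with u | u <;> rfl
  · convert H (x ()) using 2 <;> funext u <;> rcases u with u | u <;> rfl

variable {N : Type*} [L.Structure N]

theorem ElementarilyEquivalent.exists_realize_iff_s9 (h : M ≅[L] N) {β : Type*} [Finite β]
    (θ : L.Formula β) : (∃ b : β → M, θ.Realize b) ↔ ∃ b : β → N, θ.Realize b := by
  have := h.realize_sentence (Formula.iExs β (θ.relabel (Sum.inr : β → Empty ⊕ β)))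
  simpa only [Sentence.Realize, Formula.realize_iExs, Formula.realize_relabel,
    Sum.elim_comp_inr] using this

namespace Ultraproduct

theorem elementarilyEquivalent_ultrapower [Nonempty M] {α : Type*} (U : Ultrafilter α) :
    M ≅[L] (U : Filter α).Product fun _ => M :=
  elementarilyEquivalent_iff.2 fun φ => by
    rw [sentence_realize, Filter.eventually_const]

theorem exists_ultrafilter_forall_realize [Nonempty M] {β ι : Type*} {θ : ι → L.Formula β}
    (hθ : ∀ s : Finset ι, ∃ b : β → M, ∀ i ∈ s, (θ i).Realize b) :
    ∃ U : Ultrafilter (β → M), ∀ i, (θ i).Realize fun j =>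
      ((fun b : β → M => b j : (β → M) → M) : (U : Filter (β → M)).Product fun _ => M) := by
  let S : ι → Set (β → M) := fun i => {b | (θ i).Realize b}
  obtain ⟨U, hU⟩ := Ultrafilter.exists_ultrafilter_of_finite_inter_nonempty (Set.range S) <| by
    intro T hT
    obtain ⟨s, -, rfl⟩ := Finset.subset_set_image_iff.1 (Set.image_univ (f := S) ▸ hT)
    obtain ⟨b, hb⟩ := hθ s
    exact ⟨b, by simpa [S] using hb⟩
  exact ⟨U, fun i => (realize_formula_cast (θ i) _).2 (hU ⟨i, rfl⟩)⟩

end Ultraproduct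

end FirstOrder.Language

theorem stmt_9_general {L : Language} (T : L.Theory) (hcomp : T.IsComplete)
    {ι : Type*}
    (ψ : ι → (k : ℕ) × L.Formula (Unit ⊕ Fin k)) {m : ℕ}
    (φ : L.Formula (Unit ⊕ Fin m))
    (h : ∀ (M : Type w) [Nonempty M] [L.Structure M], M ⊨ T → ∀ b : Fin m → M,
      ∃ (i : ι) (c : Fin (ψ i).1 → M), realizeSet L M φ b = realizeSet L M (ψ i).2 c) :
    ∃ s : Finset ι, ∀ (M : Type w) [Nonempty M] [L.Structure M], M ⊨ T →
      ∀ b : Fin m → M, ∃ i ∈ s, ∃ c : Fin (ψ i).1 → M,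
        realizeSet L M φ b = realizeSet L M (ψ i).2 c := by
  by_contra! hcon
  let θ : ι → L.Formula (Fin m) := fun i => (sameSetFormula φ (ψ i).2).not
  obtain ⟨M₀, _, _, _, -⟩ := hcon ∅
  have hfin : ∀ s : Finset ι, ∃ b : Fin m → M₀, ∀ i ∈ s, (θ i).Realize b := by
    intro s
    obtain ⟨M, _, _, _, b, hb⟩ := hcon s
    have hM : ∃ b : Fin m → M, (Formula.iInf fun i : s => θ i).Realize b :=
      ⟨b, by simpa [Formula.realize_iInf, θ, realize_sameSetFormula] using hb⟩
    have hM₀ := ((hcomp.models_elementarily_equivalent M M₀).exists_realize_iff_s9 _).1 hM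
    simpa [Formula.realize_iInf] using hM₀
  obtain ⟨U, hU⟩ := Ultraproduct.exists_ultrafilter_forall_realize hfin
  have hN := (Ultraproduct.elementarilyEquivalent_ultrapower (M := M₀) U).theory_model (T := T)
  obtain ⟨i, c, hc⟩ := h _ hN _
  exact hU i ((realize_sameSetFormula _ _ _).2 ⟨c, hc⟩)

theorem stmt_9 {L : Language} (T : L.Theory) (hcomp : T.IsComplete)
    (hsat : T.IsSatisfiable) {ι : Type*}
    (ψ : ι → (k : ℕ) × L.Formula (Unit ⊕ Fin k)) {m : ℕ}
    (φ : L.Formula (Unit ⊕ Fin m))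
    (h : ∀ (M : Type w) [Nonempty M] [L.Structure M], M ⊨ T → ∀ b : Fin m → M,
      ∃ (i : ι) (c : Fin (ψ i).1 → M), realizeSet L M φ b = realizeSet L M (ψ i).2 c) :
    ∃ s : Finset ι, ∀ (M : Type w) [Nonempty M] [L.Structure M], M ⊨ T →
      ∀ b : Fin m → M, ∃ i ∈ s, ∃ c : Fin (ψ i).1 → M,
        realizeSet L M φ b = realizeSet L M (ψ i).2 c :=
  stmt_9_general T hcomp ψ φ h
end

section
/- Let X be a set, let c : ℚ → X and A : ℚ → 𝒫(X) be functions such that for all q, r ∈ ℚ, c(q) ∈ A(r) if and only if q < r, and suppose that the family {A(r) : r ∈ ℚ} has independence dimension ≤ 1 with respect to X. Then for all q, r ∈ ℚ with q < r, A(q) is a proper subset of A(r). -/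
theorem stmt_10 {X : Type*} (c : ℚ → X) (A : ℚ → Set X)
    (h1 : ∀ q r : ℚ, c q ∈ A r ↔ q < r)
    (h2 : IndepDimLEOne {S : Set X | ∃ r : ℚ, S = A r}) :
    ∀ q r : ℚ, q < r → A q ⊂ A r := by
  intro q r hqr
  have hq : A q ∈ {S : Set X | ∃ r : ℚ, S = A r} := ⟨q, rfl⟩
  have hr : A r ∈ {S : Set X | ∃ r : ℚ, S = A r} := ⟨r, rfl⟩
  rcases h2 _ hq _ hr with h | h | h | h
  · exfalso
    have : c (q - 1) ∈ A q ∩ A r := ⟨(h1 _ _).2 (by linarith), (h1 _ _).2 (by linarith)⟩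
    rw [h] at this; exact this
  · constructor
    · intro x hx
      by_contra hxr
      have : x ∈ A q \ A r := ⟨hx, hxr⟩
      rw [h] at this; exact this
    · intro hsub
      have : c q ∈ A q := hsub ((h1 q r).2 hqr)
      exact absurd ((h1 q q).1 this) (lt_irrefl q)
  · exfalso
    have : c q ∈ A r \ A q := ⟨(h1 _ _).2 hqr, fun hc => lt_irrefl q ((h1 q q).1 hc)⟩
    rw [h] at this; exact this
  · exfalso
    have : c (r + 1) ∈ (A q ∪ A r)ᶜ := by
      intro hc
      rcases hc with hc | hc
      · exact absurd ((h1 _ _).1 hc) (by linarith)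
      · exact absurd ((h1 _ _).1 hc) (by linarith)
    rw [h] at this; exact this
end

section
/- Let X be a set and let 𝒜 be a family of subsets of X that has independence dimension ≤ 1 with respect to X. Let A_0, A_1 ⊆ X with A_0 ≠ ∅ and A_1 ≠ X. Then the family D = {B ∈ 𝒜 : A_0 ⊆ B ⊆ A_1} is linearly ordered by inclusion: for all B, C ∈ D, either B ⊆ C or C ⊆ B. -/
theorem stmt_11 {X : Type*} (𝒜 : Set (Set X)) (h : IndepDimLEOne 𝒜)
    (A₀ A₁ : Set X) (h₀ : A₀ ≠ ∅) (h₁ : A₁ ≠ Set.univ) :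
    ∀ B ∈ {B ∈ 𝒜 | A₀ ⊆ B ∧ B ⊆ A₁}, ∀ C ∈ {B ∈ 𝒜 | A₀ ⊆ B ∧ B ⊆ A₁},
      B ⊆ C ∨ C ⊆ B := by
  rintro B ⟨hB, hB0, hB1⟩ C ⟨hC, hC0, hC1⟩
  rcases h B hB C hC with h4 | h4 | h4 | h4
  · exact absurd (Set.eq_empty_iff_forall_notMem.1 h4) (by
      obtain ⟨x, hx⟩ := Set.nonempty_iff_ne_empty.2 h₀
      exact fun hh => hh x ⟨hB0 hx, hC0 hx⟩)
  · exact Or.inl (Set.diff_eq_empty.1 h4)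
  · exact Or.inr (Set.diff_eq_empty.1 h4)
  · have hu : B ∪ C = Set.univ := Set.compl_empty_iff.1 h4
    exact absurd hu (fun hu => h₁ (Set.eq_univ_of_univ_subset
      (hu ▸ Set.union_subset hB1 hC1)))
end

section
/- Let T be a complete satisfiable L-theory and let k < ω. Suppose that every partitioned L-formula φ(x; ȳ) with lg(x) = 1 has UDTFS rank ≤ k over T. Then for every n ≥ 1, every partitioned L-formula φ(x̄; ȳ) with lg(x̄) = n has UDTFS rank ≤ k·n over T. -/
open FirstOrder Language

universe w

def UDTFSRankLE (L : Language) (T : L.Theory) {α : Type} {q : ℕ}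
    (φ : L.Formula (α ⊕ Fin q)) (n : ℕ) : Prop :=
  ∃ (L₀ : ℕ) (ψ : Fin L₀ → L.Formula (Fin q ⊕ (Fin n × Fin q))),
    ∀ (M : Type w) [Nonempty M] [L.Structure M], M ⊨ T →
      ∀ B : Finset (Fin q → M), B.Nonempty → ∀ a : α → M,
        ∃ (ℓ : Fin L₀) (c : Fin n → Fin q → M), (∀ j, c j ∈ B) ∧
          ∀ b ∈ B, ((ψ ℓ).Realize (Sum.elim b fun jk : Fin n × Fin q => c jk.1 jk.2) ↔
            φ.Realize (Sum.elim a b))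

namespace UDTFSAux

/-- packing equiv for `q` params together with `k` tuples of `q` params -/
def Epk (k q : ℕ) : (Fin q ⊕ (Fin k × Fin q)) ≃ Fin (q + k * q) :=
  (Equiv.sumCongr (Equiv.refl _) finProdFinEquiv).trans finSumFinEquiv

def relA (n q : ℕ) : (Fin (n + 1) ⊕ Fin q) → (Fin 1 ⊕ Fin (n + q)) :=
  Sum.elim
    (fun i => Fin.lastCases (Sum.inl 0)
      (fun i' => Sum.inr (finSumFinEquiv (Sum.inl i'))) i)
    (fun j => Sum.inr (finSumFinEquiv (Sum.inr j)))

def relB (n q k : ℕ) :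
    (Fin (n + q) ⊕ (Fin k × Fin (n + q))) → (Fin n ⊕ Fin (q + k * q)) :=
  Sum.elim
    (fun u => Sum.map id (fun j => Epk k q (Sum.inl j)) (finSumFinEquiv.symm u))
    (fun p => Sum.map id (fun j => Epk k q (Sum.inr (p.1, j))) (finSumFinEquiv.symm p.2))

def relC (q k r : ℕ) :
    (Fin (q + k * q) ⊕ (Fin r × Fin (q + k * q))) → (Fin q ⊕ (Fin (k + r) × Fin q)) :=
  Sum.elim
    (fun u => match (Epk k q).symm u with
      | Sum.inl j => Sum.inl j
      | Sum.inr (m, j) => Sum.inr (Fin.castAdd r m, j))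
    (fun p => match (Epk k q).symm p.2 with
      | Sum.inl j => Sum.inr (Fin.natAdd k p.1, j)
      | Sum.inr (m, j) => Sum.inr (Fin.castAdd r m, j))

def join {M : Type w} {n q : ℕ} (a : Fin n → M) (b : Fin q → M) : Fin (n + q) → M :=
  fun u => Sum.elim a b (finSumFinEquiv.symm u)

def pack {M : Type w} {q k : ℕ} (b : Fin q → M) (c : Fin k → Fin q → M) :
    Fin (q + k * q) → M :=
  fun u => Sum.elim b (fun p => c p.1 p.2) ((Epk k q).symm u)

end UDTFSAux

open UDTFSAux

lemma UDTFSRankLE.mono {L : Language} {T : L.Theory} {α : Type} {q : ℕ}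
    {φ : L.Formula (α ⊕ Fin q)} {m m' : ℕ} (hm : m ≤ m')
    (h : UDTFSRankLE.{w} L T φ m) : UDTFSRankLE.{w} L T φ m' := by
  obtain ⟨L₀, ψ, H⟩ := h
  refine ⟨L₀, fun ℓ => (ψ ℓ).relabel (Sum.map id (Prod.map (Fin.castLE hm) id)), ?_⟩
  intro M _ _ hM B hB a
  obtain ⟨ℓ, c, hcB, hc⟩ := H M hM B hB a
  obtain ⟨b₀, hb₀⟩ := hB
  refine ⟨ℓ, fun j => if hj : (j : ℕ) < m then c ⟨j, hj⟩ else b₀, fun j => ?_, fun b hb => ?_⟩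
  · dsimp only; split
    · exact hcB _
    · exact hb₀
  · rw [Formula.realize_relabel, ← hc b hb]
    apply iff_of_eq; congr 1
    funext u
    rcases u with j | ⟨t, i⟩
    · rfl
    · simp only [Function.comp_apply, Sum.map_inr, Prod.map_apply, Sum.elim_inr, id_eq]
      have ht : ((Fin.castLE hm t : Fin m') : ℕ) < m := t.isLt
      rw [dif_pos ht]
      congr 1

lemma UDTFS_step {L : Language} {T : L.Theory} {k r : ℕ}
    (h1 : ∀ (q : ℕ) (φ : L.Formula (Fin 1 ⊕ Fin q)), UDTFSRankLE.{w} L T φ k)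
    {n : ℕ}
    (hIH : ∀ (q : ℕ) (φ : L.Formula (Fin n ⊕ Fin q)), UDTFSRankLE.{w} L T φ r)
    (q : ℕ) (φ : L.Formula (Fin (n + 1) ⊕ Fin q)) :
    UDTFSRankLE.{w} L T φ (k + r) := by
  classical
  obtain ⟨L₁, ψ₁, H1⟩ := h1 (n + q) (φ.relabel (relA n q))
  have hχ := fun ℓ : Fin L₁ => hIH (q + k * q) ((ψ₁ ℓ).relabel (relB n q k))
  choose L₂ ψ₂ H2 using hχ
  let e := (Fintype.equivFin (Σ ℓ : Fin L₁, Fin (L₂ ℓ))).symm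
  refine ⟨Fintype.card (Σ ℓ : Fin L₁, Fin (L₂ ℓ)),
    fun t => (ψ₂ (e t).1 (e t).2).relabel (relC q k r), ?_⟩
  intro M _ _ hM B hB a
  set a' : Fin n → M := fun i => a i.castSucc with ha'
  obtain ⟨ℓ₁, c₁, hc₁mem, hc₁⟩ :=
    H1 M hM (B.image (join a')) (hB.image _) (fun _ => a (Fin.last n))
  choose cb hcbB hcbj using fun m => Finset.mem_image.mp (hc₁mem m)
  obtain ⟨ℓ₂, c₂, hc₂mem, hc₂⟩ :=
    H2 ℓ₁ M hM (B.image (fun b => pack b cb)) (hB.image _) a'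
  choose db hdbB hdbp using fun t => Finset.mem_image.mp (hc₂mem t)
  set cfin : Fin (k + r) → Fin q → M :=
    fun j => Fin.addCases (motive := fun _ => Fin q → M) cb db j with hcfin
  have hcfinl : ∀ m : Fin k, cfin (Fin.castAdd r m) = cb m := fun m => Fin.addCases_left m
  have hcfinr : ∀ t : Fin r, cfin (Fin.natAdd k t) = db t := fun t => Fin.addCases_right t
  refine ⟨e.symm ⟨ℓ₁, ℓ₂⟩, cfin, fun j => ?_, fun b hb => ?_⟩
  · refine Fin.addCases (motive := fun j => cfin j ∈ B) (fun m => ?_) (fun t => ?_) j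
    · show cfin (Fin.castAdd r m) ∈ B
      rw [hcfinl]; exact hcbB m
    · show cfin (Fin.natAdd k t) ∈ B
      rw [hcfinr]; exact hdbB t
  · have hs : e (e.symm ⟨ℓ₁, ℓ₂⟩) = ⟨ℓ₁, ℓ₂⟩ := e.apply_symm_apply _
    beta_reduce
    rw [hs]
    rw [Formula.realize_relabel]
    -- step 1: rewrite valuation through relC
    have step1 :
        (Sum.elim b (fun jk : Fin (k + r) × Fin q => cfin jk.1 jk.2)) ∘ relC q k r
        = Sum.elim (pack b cb) (fun p : Fin r × Fin (q + k * q) => c₂ p.1 p.2) := by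
      funext u
      rcases u with u | ⟨t, u⟩
      · rcases hu : (Epk k q).symm u with j | ⟨m, j⟩
        · simp only [Function.comp_apply, relC, Sum.elim_inl, hu, Sum.elim_inl, pack]
        · simp only [Function.comp_apply, relC, Sum.elim_inl, hu, Sum.elim_inr, pack]
          rw [hcfinl]
      · rcases hu : (Epk k q).symm u with j | ⟨m, j⟩
        · simp only [Function.comp_apply, relC, Sum.elim_inr, hu, Sum.elim_inl]
          rw [hcfinr, ← hdbp t]
          simp only [pack, hu, Sum.elim_inl]
        · simp only [Function.comp_apply, relC, Sum.elim_inr, hu]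
          rw [hcfinl, ← hdbp t]
          simp only [pack, hu, Sum.elim_inr]
    rw [step1, hc₂ (pack b cb) (Finset.mem_image_of_mem _ hb)]
    rw [Formula.realize_relabel]
    -- step 2: rewrite valuation through relB
    have step2 :
        (Sum.elim a' (pack b cb)) ∘ relB n q k
        = Sum.elim (join a' b) (fun p : Fin k × Fin (n + q) => c₁ p.1 p.2) := by
      funext u
      rcases u with u | ⟨m, u⟩
      · rcases hu : finSumFinEquiv.symm u with i | j
        · simp only [Function.comp_apply, relB, Sum.elim_inl, hu, Sum.map_inl, id_eq, join]
        · simp only [Function.comp_apply, relB, Sum.elim_inl, hu, Sum.map_inr, join, pack,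
            Equiv.symm_apply_apply, Sum.elim_inr]
      · rcases hu : finSumFinEquiv.symm u with i | j
        · simp only [Function.comp_apply, relB, Sum.elim_inr, hu, Sum.map_inl, id_eq,
            Sum.elim_inl]
          rw [← hcbj m]
          simp only [join, hu, Sum.elim_inl]
        · simp only [Function.comp_apply, relB, Sum.elim_inr, hu, Sum.map_inr, pack,
            Equiv.symm_apply_apply, Sum.elim_inr]
          rw [← hcbj m]
          simp only [join, hu, Sum.elim_inr]
    rw [step2, hc₁ (join a' b) (Finset.mem_image_of_mem _ hb)]
    rw [Formula.realize_relabel]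
    -- step 3: rewrite valuation through relA
    have step3 :
        (Sum.elim (fun _ : Fin 1 => a (Fin.last n)) (join a' b)) ∘ relA n q
        = Sum.elim a b := by
      funext u
      rcases u with i | j
      · refine Fin.lastCases (motive := fun i =>
          ((Sum.elim (fun _ : Fin 1 => a (Fin.last n)) (join a' b)) ∘ relA n q) (Sum.inl i)
            = Sum.elim a b (Sum.inl i)) ?_ (fun i' => ?_) i
        · simp only [Function.comp_apply, relA, Sum.elim_inl, Fin.lastCases_last]
        · simp only [Function.comp_apply, relA, Sum.elim_inl, Fin.lastCases_castSucc,
            Sum.elim_inr, join, Equiv.symm_apply_apply, Sum.elim_inl, ha']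
      · simp only [Function.comp_apply, relA, Sum.elim_inr, join, Equiv.symm_apply_apply]
    rw [step3]

theorem stmt_13 {L : Language} (T : L.Theory) (hcomp : T.IsComplete)
    (hsat : T.IsSatisfiable) (k : ℕ)
    (h : ∀ (q : ℕ) (φ : L.Formula (Fin 1 ⊕ Fin q)), UDTFSRankLE.{w} L T φ k) :
    ∀ n : ℕ, 1 ≤ n → ∀ (q : ℕ) (φ : L.Formula (Fin n ⊕ Fin q)),
      UDTFSRankLE.{w} L T φ (k * n) := by
  have main : ∀ m : ℕ, ∀ (q : ℕ) (φ : L.Formula (Fin (m + 1) ⊕ Fin q)),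
      UDTFSRankLE.{w} L T φ (k * (m + 1)) := by
    intro m
    induction m with
    | zero => exact fun q φ => (h q φ).mono (by omega)
    | succ m ih =>
      intro q φ
      exact (UDTFS_step h ih q φ).mono (by ring_nf; omega)
  intro n hn q φ
  obtain ⟨m, rfl⟩ : ∃ m, n = m + 1 := ⟨n - 1, by omega⟩
  exact main m q φ
end

section
/- Let T be a complete satisfiable L-theory that is fully VC-minimal. Then every partitioned L-formula φ(x; ȳ) with x a single variable has UDTFS rank ≤ 1 over T. -/
open FirstOrder Language

universe w

/-- Boolean combinations (in the free variables `(x; ȳ)` with `lg ȳ = m`) of formulas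
from `Ψ`, where each formula `ψ(x; z̄) ∈ Ψ` may be instantiated by substituting
variables from `ȳ` for `z̄`. -/
inductive BoolCombOf {L : Language} (Ψ : Set ((k : ℕ) × L.Formula (Unit ⊕ Fin k)))
    (m : ℕ) : L.Formula (Unit ⊕ Fin m) → Prop
  | of (p : (k : ℕ) × L.Formula (Unit ⊕ Fin k)) (hp : p ∈ Ψ) (ρ : Fin p.1 → Fin m) :
      BoolCombOf Ψ m (p.2.relabel (Sum.map id ρ))
  | not {θ : L.Formula (Unit ⊕ Fin m)} : BoolCombOf Ψ m θ → BoolCombOf Ψ m θ.not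
  | and {θ₁ θ₂ : L.Formula (Unit ⊕ Fin m)} :
      BoolCombOf Ψ m θ₁ → BoolCombOf Ψ m θ₂ → BoolCombOf Ψ m (θ₁ ⊓ θ₂)
  | or {θ₁ θ₂ : L.Formula (Unit ⊕ Fin m)} :
      BoolCombOf Ψ m θ₁ → BoolCombOf Ψ m θ₂ → BoolCombOf Ψ m (θ₁ ⊔ θ₂)

/-- `T` is fully VC-minimal: there is a set `Ψ` of partitioned formulas `ψ(x; z̄)`
(`x` a single variable) whose instances have independence dimension `≤ 1` in every
model of `T`, and such that every partitioned formula `φ(x; ȳ)` is `T`-equivalent to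
a Boolean combination of formulas from `Ψ` in the free variables `(x; ȳ)`. -/
def FullyVCMinimal (L : Language) (T : L.Theory) : Prop :=
  ∃ Ψ : Set ((k : ℕ) × L.Formula (Unit ⊕ Fin k)),
    (∀ (M : Type w) [Nonempty M] [L.Structure M], M ⊨ T →
      IndepDimLEOne {S : Set M | ∃ p ∈ Ψ, ∃ b : Fin p.1 → M, S = realizeSet L M p.2 b}) ∧
    ∀ (m : ℕ) (φ : L.Formula (Unit ⊕ Fin m)),
      ∃ θ : L.Formula (Unit ⊕ Fin m), BoolCombOf Ψ m θ ∧
        ∀ (M : Type w) [Nonempty M] [L.Structure M], M ⊨ T →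
          ∀ v : Unit ⊕ Fin m → M, φ.Realize v ↔ θ.Realize v

/-!
Fix a point `a` and a finite nonempty parameter set `B`. Up to `T`-equivalence, `φ(x; ȳ)` is a
Boolean combination of leaves `ψ(x; ȳ)` drawn from `Ψ`, and no two instances of formulas of `Ψ`
cross. Among the finitely many leaf sets `ψ(M; b̄)` with `b̄ ∈ B`, pick one whose side `T`
containing `a` is minimal. Then for every leaf set `A`, `a ∈ A` holds iff `T ⊆ A`, or `T` meets `A`
and `A ⊄ T`. As `T` is defined by a single leaf, possibly negated, at a single `c̄ ∈ B`,
substituting this test for the leaves of the Boolean combination yields a formula `δ(ȳ; c̄)` that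
defines the `φ`-type of `a` over `B`, and only finitely many such `δ` occur.
-/

universe u v

section Crossing

variable {X : Type*}

def Crossing (A B : Set X) : Prop :=
  (A ∩ B).Nonempty ∧ (A \ B).Nonempty ∧ (B \ A).Nonempty ∧ (A ∪ B)ᶜ.Nonempty

lemma IndepDimLEOne.not_crossing {𝒜 : Set (Set X)} (h : IndepDimLEOne 𝒜) {A B : Set X}
    (hA : A ∈ 𝒜) (hB : B ∈ 𝒜) : ¬ Crossing A B := by
  rintro ⟨h₁, h₂, h₃, h₄⟩
  rcases h A hA B hB with h | h | h | h <;> simp_all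

lemma crossing_compl_right {A B : Set X} : Crossing A Bᶜ ↔ Crossing A B := by
  simp only [Crossing, Set.sdiff_eq, Set.compl_union, _root_.compl_compl, Set.inter_comm B,
    Set.inter_comm Bᶜ]
  tauto

def side (a : X) (S : Set X) : Set X := {x | x ∈ S ↔ a ∈ S}

lemma mem_side_self (a : X) (S : Set X) : a ∈ side a S := Iff.rfl

lemma side_of_mem {a : X} {S : Set X} (h : a ∈ S) : side a S = S := by ext; simp [side, h]

lemma side_of_notMem {a : X} {S : Set X} (h : a ∉ S) : side a S = Sᶜ := by ext; simp [side, h]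

lemma crossing_side {a : X} {A S : Set X} : Crossing A (side a S) ↔ Crossing A S := by
  by_cases h : a ∈ S
  · rw [side_of_mem h]
  · rw [side_of_notMem h, crossing_compl_right]

def SideTest (T A : Set X) : Prop := T ⊆ A ∨ ((T ∩ A).Nonempty ∧ ¬ A ⊆ T)

lemma mem_iff_sideTest {a : X} {A T : Set X} (haT : a ∈ T) (hAT : ¬ Crossing A T)
    (hmin : side a A ⊆ T → T ⊆ side a A) : a ∈ A ↔ SideTest T A := by
  constructor
  · intro ha
    by_cases hA : A ⊆ T
    · rw [side_of_mem ha] at hmin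
      exact Or.inl (hmin hA)
    · exact Or.inr ⟨⟨a, haT, ha⟩, hA⟩
  · rintro (hTA | ⟨⟨x, hxT, hxA⟩, hAT'⟩)
    · exact hTA haT
    · by_contra ha
      rw [side_of_notMem ha] at hmin
      obtain ⟨y, hyA, hyT⟩ := Set.not_subset.1 hAT'
      obtain ⟨z, hzA, hzT⟩ : ∃ z, z ∉ A ∧ z ∉ T := by
        by_contra! h
        exact hmin h hxT hxA
      exact hAT ⟨⟨x, hxA, hxT⟩, ⟨y, hyA, hyT⟩, ⟨a, haT, ha⟩, z, by simp [hzA, hzT]⟩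

lemma IndepDimLEOne.exists_forall_mem_iff_sideTest {𝒜 : Set (Set X)} (h𝒜 : IndepDimLEOne 𝒜)
    {F : Set (Set X)} (hF : F.Finite) (hne : F.Nonempty) (hF𝒜 : F ⊆ 𝒜) (a : X) :
    ∃ S ∈ F, ∀ A ∈ F, a ∈ A ↔ SideTest (side a S) A := by
  obtain ⟨S, hS, hmin⟩ := hF.exists_minimalFor (side a) F hne
  refine ⟨S, hS, fun A hA => mem_iff_sideTest (mem_side_self a S) ?_ (hmin hA)⟩
  rw [crossing_side]
  exact h𝒜.not_crossing (hF𝒜 hA) (hF𝒜 hS)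

end Crossing

namespace FirstOrder.Language.Formula

variable {L : Language} {M : Type*} [L.Structure M] {α : Type*}

lemma realize_iAlls_unit {φ : L.Formula (α ⊕ Unit)} {v : α → M} :
    (φ.iAlls Unit).Realize v ↔ ∀ x : M, φ.Realize (Sum.elim v fun _ => x) :=
  realize_iAlls.trans (Equiv.funUnique Unit M).forall_congr_left

lemma realize_iExs_unit {φ : L.Formula (α ⊕ Unit)} {v : α → M} :
    (φ.iExs Unit).Realize v ↔ ∃ x : M, φ.Realize (Sum.elim v fun _ => x) :=
  realize_iExs.trans (Equiv.funUnique Unit M).exists_congr_left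

end FirstOrder.Language.Formula

section Formulas

variable {L : Language}

lemma realizeSet_relabel {M : Type*} [L.Structure M] {k m : ℕ}
    (φ : L.Formula (Unit ⊕ Fin k)) (ρ : Fin k → Fin m) (b : Fin m → M) :
    realizeSet L M (φ.relabel (Sum.map id ρ)) b = realizeSet L M φ (b ∘ ρ) := by
  ext x
  simp only [realizeSet, Set.mem_ofPred_eq, Formula.realize_relabel, Sum.elim_comp_map,
    Function.comp_id]

lemma realizeSet_not {M : Type*} [L.Structure M] {m : ℕ} (φ : L.Formula (Unit ⊕ Fin m))
    (b : Fin m → M) : realizeSet L M φ.not b = (realizeSet L M φ b)ᶜ := by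
  ext x
  simp [realizeSet]

lemma exists_realizeSet_eq_side {M : Type*} [L.Structure M] {m : ℕ}
    (φ : L.Formula (Unit ⊕ Fin m)) (c : Fin m → M) (a : M) :
    ∃ σ ∈ [φ, φ.not], realizeSet L M σ c = side a (realizeSet L M φ c) := by
  by_cases ha : a ∈ realizeSet L M φ c
  · exact ⟨φ, List.mem_cons_self .., (side_of_mem ha).symm⟩
  · exact ⟨φ.not, by simp, by rw [realizeSet_not, side_of_notMem ha]⟩

/-- A formula `ψ(x; z̄)` together with a renaming of its parameters `z̄` into `ȳ = (y₀, …, y_{m-1})`: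
the atoms of `BoolCombOf Ψ m`. -/
abbrev Leaf (L : Language) (m : ℕ) :=
  (p : (k : ℕ) × L.Formula (Unit ⊕ Fin k)) × (Fin p.1 → Fin m)

def Leaf.formula {m : ℕ} (l : Leaf L m) : L.Formula (Unit ⊕ Fin m) :=
  l.1.2.relabel (Sum.map id l.2)

lemma BoolCombOf.exists_leaves {Ψ : Set ((k : ℕ) × L.Formula (Unit ⊕ Fin k))} {m : ℕ}
    {θ : L.Formula (Unit ⊕ Fin m)} (h : BoolCombOf Ψ m θ) :
    ∃ leaves : List (Leaf L m), leaves ≠ [] ∧ (∀ l ∈ leaves, l.1 ∈ Ψ) ∧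
      ∀ {β : Type v} (r : Leaf L m → L.Formula β), ∃ θ' : L.Formula β,
        ∀ (M : Type u) [L.Structure M] (v : β → M) (w : Unit ⊕ Fin m → M),
          (∀ l ∈ leaves, ((r l).Realize v ↔ l.formula.Realize w)) →
            (θ'.Realize v ↔ θ.Realize w) := by
  induction h with
  | of p hp ρ =>
    refine ⟨[⟨p, ρ⟩], List.cons_ne_nil _ _, by simpa using hp, fun r => ⟨r ⟨p, ρ⟩, ?_⟩⟩
    exact fun M _ v w hr => hr _ (List.mem_singleton_self _)
  | not _ ih =>
    obtain ⟨leaves, hne, hΨ, hsubst⟩ := ih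
    refine ⟨leaves, hne, hΨ, fun r => ?_⟩
    obtain ⟨θ', hθ'⟩ := hsubst r
    refine ⟨θ'.not, fun M _ v w hr => ?_⟩
    simpa only [Formula.realize_not] using not_congr (hθ' M v w hr)
  | and _ _ ih₁ ih₂ =>
    obtain ⟨leaves₁, hne₁, hΨ₁, hsubst₁⟩ := ih₁
    obtain ⟨leaves₂, -, hΨ₂, hsubst₂⟩ := ih₂
    refine ⟨leaves₁ ++ leaves₂, by simp [hne₁], by simpa [or_imp, forall_and] using ⟨hΨ₁, hΨ₂⟩,
      fun r => ?_⟩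
    obtain ⟨θ₁, hθ₁⟩ := hsubst₁ r
    obtain ⟨θ₂, hθ₂⟩ := hsubst₂ r
    refine ⟨θ₁ ⊓ θ₂, fun M _ v w hr => ?_⟩
    simpa only [Formula.realize_inf] using
      and_congr (hθ₁ M v w fun l hl => hr l (List.mem_append_left _ hl))
        (hθ₂ M v w fun l hl => hr l (List.mem_append_right _ hl))
  | or _ _ ih₁ ih₂ =>
    obtain ⟨leaves₁, hne₁, hΨ₁, hsubst₁⟩ := ih₁
    obtain ⟨leaves₂, -, hΨ₂, hsubst₂⟩ := ih₂
    refine ⟨leaves₁ ++ leaves₂, by simp [hne₁], by simpa [or_imp, forall_and] using ⟨hΨ₁, hΨ₂⟩,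
      fun r => ?_⟩
    obtain ⟨θ₁, hθ₁⟩ := hsubst₁ r
    obtain ⟨θ₂, hθ₂⟩ := hsubst₂ r
    refine ⟨θ₁ ⊔ θ₂, fun M _ v w hr => ?_⟩
    simpa only [Formula.realize_sup] using
      or_congr (hθ₁ M v w fun l hl => hr l (List.mem_append_left _ hl))
        (hθ₂ M v w fun l hl => hr l (List.mem_append_right _ hl))

noncomputable def sideTestFormula {m n : ℕ} (σ : L.Formula (Unit ⊕ Fin n))
    (ψ : L.Formula (Unit ⊕ Fin m)) : L.Formula (Fin m ⊕ Fin n) :=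
  let σ' := σ.relabel (Sum.swap ∘ Sum.map id Sum.inr)
  let ψ' := ψ.relabel (Sum.swap ∘ Sum.map id Sum.inl)
  (σ'.imp ψ').iAlls Unit ⊔ ((σ' ⊓ ψ').iExs Unit ⊓ ((ψ'.imp σ').iAlls Unit).not)

lemma realize_sideTestFormula {M : Type*} [L.Structure M] {m n : ℕ}
    (σ : L.Formula (Unit ⊕ Fin n)) (ψ : L.Formula (Unit ⊕ Fin m)) (b : Fin m → M)
    (c : Fin n → M) :
    (sideTestFormula σ ψ).Realize (Sum.elim b c) ↔
      SideTest (realizeSet L M σ c) (realizeSet L M ψ b) := by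
  simp only [sideTestFormula, Formula.realize_sup, Formula.realize_inf, Formula.realize_not,
    Formula.realize_imp, Formula.realize_iAlls_unit, Formula.realize_iExs_unit,
    Formula.realize_relabel, ← Function.comp_assoc, Sum.elim_swap, Sum.elim_comp_map,
    Function.comp_id, Sum.elim_comp_inr, Sum.elim_comp_inl]
  rfl

lemma exists_leaf_forall_mem_iff_sideTest {M : Type*} [L.Structure M]
    {Ψ : Set ((k : ℕ) × L.Formula (Unit ⊕ Fin k))}
    (hΨ : IndepDimLEOne {S : Set M | ∃ p ∈ Ψ, ∃ b : Fin p.1 → M, S = realizeSet L M p.2 b})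
    {m : ℕ} {leaves : List (Leaf L m)} (hne : leaves ≠ []) (hleaves : ∀ l ∈ leaves, l.1 ∈ Ψ)
    {B : Finset (Fin m → M)} (hB : B.Nonempty) (a : M) :
    ∃ l₀ ∈ leaves, ∃ c ∈ B, ∀ l ∈ leaves, ∀ b ∈ B,
      a ∈ realizeSet L M l.formula b ↔
        SideTest (side a (realizeSet L M l₀.formula c)) (realizeSet L M l.formula b) := by
  let F := Set.image2 (fun (l : Leaf L m) b => realizeSet L M l.formula b) {l | l ∈ leaves} B
  have hF : F.Finite := leaves.finite_toSet.image2 _ B.finite_toSet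
  have hFne : F.Nonempty := Set.Nonempty.image2 (List.exists_mem_of_ne_nil leaves hne) hB
  have hFΨ : F ⊆ {S | ∃ p ∈ Ψ, ∃ b : Fin p.1 → M, S = realizeSet L M p.2 b} := by
    rintro _ ⟨l, hl, b, -, rfl⟩
    exact ⟨l.1, hleaves l hl, b ∘ l.2, realizeSet_relabel ..⟩
  obtain ⟨_, ⟨l₀, hl₀, c, hc, rfl⟩, hS⟩ := hΨ.exists_forall_mem_iff_sideTest hF hFne hFΨ a
  exact ⟨l₀, hl₀, c, hc, fun l hl b hb => hS _ ⟨l, hl, b, hb, rfl⟩⟩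

lemma udtfsRankLE_one_of_list (T : L.Theory) {α : Type} {q : ℕ} (φ : L.Formula (α ⊕ Fin q))
    (Δ : List (L.Formula (Fin q ⊕ Fin q)))
    (h : ∀ (M : Type w) [Nonempty M] [L.Structure M], M ⊨ T →
      ∀ B : Finset (Fin q → M), B.Nonempty → ∀ a : α → M,
        ∃ δ ∈ Δ, ∃ c ∈ B, ∀ b ∈ B, (δ.Realize (Sum.elim b c) ↔ φ.Realize (Sum.elim a b))) :
    UDTFSRankLE.{w} L T φ 1 := by
  refine ⟨Δ.length, fun i => (Δ.get i).relabel (Sum.map id fun j => (0, j)), ?_⟩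
  intro M _ _ hM B hB a
  obtain ⟨δ, hδ, c, hc, hδc⟩ := h M hM B hB a
  obtain ⟨i, rfl⟩ := List.get_of_mem hδ
  refine ⟨i, fun _ => c, fun _ => hc, fun b hb => ?_⟩
  rw [Formula.realize_relabel, Sum.elim_comp_map]
  exact hδc b hb

end Formulas

theorem stmt_14_general {L : Language} (T : L.Theory) (hvc : FullyVCMinimal.{w} L T) :
    ∀ (q : ℕ) (φ : L.Formula (Unit ⊕ Fin q)), UDTFSRankLE.{w} L T φ 1 := by
  intro q φ
  obtain ⟨Ψ, hΨ, hBC⟩ := hvc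
  obtain ⟨θ, hθ, hφθ⟩ := hBC q φ
  obtain ⟨leaves, hne, hleaves, hsubst⟩ := hθ.exists_leaves
  choose Θ hΘ using fun σ : L.Formula (Unit ⊕ Fin q) =>
    hsubst fun l => sideTestFormula σ l.formula
  refine udtfsRankLE_one_of_list T φ
    ((leaves.flatMap fun l => [l.formula, l.formula.not]).map Θ) fun M _ _ hM B hB a => ?_
  obtain ⟨l₀, hl₀, c, hc, hside⟩ :=
    exists_leaf_forall_mem_iff_sideTest (hΨ M hM) hne hleaves hB (a ())
  obtain ⟨σ, hσ, hσc⟩ := exists_realizeSet_eq_side l₀.formula c (a ())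
  refine ⟨Θ σ, List.mem_map_of_mem (List.mem_flatMap.2 ⟨l₀, hl₀, hσ⟩), c, hc, fun b hb => ?_⟩
  rw [hφθ M hM]
  refine hΘ σ M (Sum.elim b c) (Sum.elim a b) fun l hl => ?_
  rw [realize_sideTestFormula, hσc]
  exact (hside l hl b hb).symm

theorem stmt_14 {L : Language} (T : L.Theory) (hcomp : T.IsComplete)
    (hsat : T.IsSatisfiable) (hvc : FullyVCMinimal.{w} L T) :
    ∀ (q : ℕ) (φ : L.Formula (Unit ⊕ Fin q)), UDTFSRankLE.{w} L T φ 1 :=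
  stmt_14_general T hvc
end
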